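/- arXiv:2512.16186 — 4 statements merged into one kernel-verified Lean document; each statement's English description precedes it below -/
import Mathlib

section
/- There exist a constant C > 0 and an integer k₀ (independent of q) such that for every integer q ≥ 2 and any two words w and w' of the same length k ≥ k₀ over an alphabet of q letters, with the autocorrelation of w larger than the autocorrelation of w', the coefficients c_w and c_{w'} satisfy |c_{w'}/c_w − 1 − Δ/A_{w'}(q)| ≤ C·k·q^{-k/3+4}·Δ/A_{w'}(q), where Δ = A_w(q) − A_{w'}(q). -/
/-- The `i`-th autocorrelation bit `b_i` of a word `w` (for `1 ≤ i ≤ w.length`):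
`1` if the prefix of `w` of length `i` equals the suffix of `w` of length `i`, else `0`. -/
def acorrBit {α : Type*} [DecidableEq α] (w : List α) (i : ℕ) : ℕ :=
  if w.take i = w.drop (w.length - i) then 1 else 0

/-- The inverse autocorrelation polynomial `A_w(x) = ∑_{i=1}^k b_i x^(i-1)`, over `ℝ`. -/
noncomputable def APolyR {α : Type*} [DecidableEq α] (w : List α) : Polynomial ℝ :=
  ∑ i ∈ Finset.range w.length, Polynomial.C (acorrBit w (i + 1) : ℝ) * Polynomial.X ^ i

/-- The inverse autocorrelation polynomial `A_w(x)`, over `ℂ`. -/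
noncomputable def APolyC {α : Type*} [DecidableEq α] (w : List α) : Polynomial ℂ :=
  ∑ i ∈ Finset.range w.length, Polynomial.C (acorrBit w (i + 1) : ℂ) * Polynomial.X ^ i

/-- The recurrence polynomial `P_w(x) = 1 + (x - q)·A_w(x)`, over `ℝ`. -/
noncomputable def PPolyR (q : ℕ) {α : Type*} [DecidableEq α] (w : List α) : Polynomial ℝ :=
  1 + (Polynomial.X - Polynomial.C (q : ℝ)) * APolyR w

/-- The recurrence polynomial `P_w(x) = 1 + (x - q)·A_w(x)`, over `ℂ`. -/
noncomputable def PPolyC (q : ℕ) {α : Type*} [DecidableEq α] (w : List α) : Polynomial ℂ :=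
  1 + (Polynomial.X - Polynomial.C (q : ℂ)) * APolyC w

/-- `h_w(n)`: the number of words of length `n` over `Fin q` whose last `w.length` letters
equal `w` and which contain no other occurrence of `w` as consecutive letters. -/
noncomputable def hitCount (q : ℕ) (w : List (Fin q)) (n : ℕ) : ℕ :=
  Nat.card {l : List (Fin q) // l.length = n ∧ l.drop (n - w.length) = w ∧
    ∀ p < n - w.length, (l.drop p).take w.length ≠ w}

/-- The first hitting probability `P_h(w,n) = h_w(n+k)/q^(n+k)` where `k = w.length`. -/
noncomputable def hitProb (q : ℕ) (w : List (Fin q)) (n : ℕ) : ℝ :=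
  (hitCount q w (n + w.length) : ℝ) / (q : ℝ) ^ (n + w.length)

/-- The constant `C_{w/w'} = ln(1+r)/r` with `r = (A_w(q) − A_{w'}(q))/A_{w'}(q)`. -/
noncomputable def Crat (q : ℕ) (w w' : List (Fin q)) : ℝ :=
  Real.log (1 + ((APolyR w).eval (q : ℝ) - (APolyR w').eval (q : ℝ)) / (APolyR w').eval (q : ℝ)) /
    (((APolyR w).eval (q : ℝ) - (APolyR w').eval (q : ℝ)) / (APolyR w').eval (q : ℝ))

/-- The partial-fraction coefficient `c_w = 1/P_w'(α_m)`. -/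
noncomputable def cwCoef (q : ℕ) (w : List (Fin q)) (αm : ℝ) : ℝ :=
  1 / ((PPolyR q w).derivative.eval αm)

namespace S14

lemma nat_big {k : ℕ} (h : 100 ≤ k) : 72 * k ≤ 2 ^ (k - 2) := by
  induction k, h using Nat.le_induction with
  | base => norm_num
  | succ n hn ih =>
    have h2 : 72 ≤ 2 ^ (n - 2) := le_trans (by omega) ih
    have he : n + 1 - 2 = (n - 2) + 1 := by omega
    rw [he, pow_succ]
    omega

lemma pow_diff {x y M : ℝ} (hx : 0 ≤ x) (hy : x ≤ y) (hM : y ≤ M) (d : ℕ) :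
    y ^ d - x ^ d ≤ d * M ^ (d - 1) * (y - x) := by
  induction d with
  | zero => simp
  | succ n ih =>
    have hM0 : 0 ≤ M := le_trans (le_trans hx hy) hM
    rcases Nat.eq_zero_or_pos n with h0 | h0
    · subst h0; simp
    · have hxn : x ^ n ≤ M ^ n := pow_le_pow_left₀ hx (le_trans hy hM) n
      have hyx : 0 ≤ y ^ n - x ^ n := by
        have := pow_le_pow_left₀ hx hy n; linarith
      have h2 : y * (y ^ n - x ^ n) ≤ M * (n * M ^ (n - 1) * (y - x)) := by
        calc y * (y ^ n - x ^ n) ≤ M * (y ^ n - x ^ n) :=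
              mul_le_mul_of_nonneg_right hM hyx
          _ ≤ M * (n * M ^ (n - 1) * (y - x)) := mul_le_mul_of_nonneg_left ih hM0
      have h3 : x ^ n * (y - x) ≤ M ^ n * (y - x) :=
        mul_le_mul_of_nonneg_right hxn (by linarith)
      have hMM : M * M ^ (n - 1) = M ^ n := by
        rw [← pow_succ']; congr 1; omega
      have h4 : M * (↑n * M ^ (n - 1) * (y - x)) = ↑n * M ^ n * (y - x) := by
        rw [← hMM]; ring
      have h1 : y ^ (n+1) - x ^ (n+1) = y * (y ^ n - x ^ n) + x ^ n * (y - x) := by ring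
      have he : n + 1 - 1 = n := by omega
      rw [he]
      push_cast
      linarith

/-- geometric bound: for x ≥ 3/2, ∑_{d<n} x^d ≤ 3 x^(n-1). -/
lemma geom3 {x : ℝ} (hx : (3:ℝ)/2 ≤ x) : ∀ n : ℕ, 1 ≤ n →
    ∑ d ∈ Finset.range n, x ^ d ≤ 3 * x ^ (n - 1) := by
  intro n hn
  induction n with
  | zero => omega
  | succ m ih =>
    rcases Nat.eq_zero_or_pos m with h | h
    · subst h; norm_num
    · rw [Finset.sum_range_succ]
      have h1 := ih h
      have h2 : 3 * x ^ (m-1) + x ^ m ≤ 3 * x ^ m := by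
        have he : x ^ m = x ^ (m - 1) * x := by
          rw [← pow_succ]; congr 1; omega
        rw [he]
        have hxp : 0 ≤ x ^ (m-1) := by positivity
        nlinarith
      have he : m + 1 - 1 = m := by omega
      rw [he]; linarith

/-- ∑_{d<n} x^d ≤ x^n - 1 for x ≥ 2. -/
lemma geom_lt {x : ℝ} (hx : (2:ℝ) ≤ x) : ∀ n : ℕ,
    ∑ d ∈ Finset.range n, x ^ d ≤ x ^ n - 1 := by
  intro n
  induction n with
  | zero => simp
  | succ m ih =>
    rw [Finset.sum_range_succ, pow_succ]
    have hxp : (0:ℝ) ≤ x ^ m := by positivity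
    nlinarith

open Finset

lemma pow_diff_abs {x y M : ℝ} (hx : 0 ≤ x) (hxM : x ≤ M) (hy : 0 ≤ y) (hyM : y ≤ M) (d : ℕ) :
    |x ^ d - y ^ d| ≤ d * M ^ (d - 1) * |x - y| := by
  have key : ∀ a b : ℝ, 0 ≤ a → a ≤ b → b ≤ M →
      |b ^ d - a ^ d| ≤ d * M ^ (d-1) * |b - a| := by
    intro a b ha hab hbM
    have h1 : b ^ d - a ^ d ≤ d * M ^ (d-1) * (b - a) := pow_diff ha hab hbM d
    have h2 : 0 ≤ b ^ d - a ^ d := by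
      have := pow_le_pow_left₀ ha hab d; linarith
    rw [abs_of_nonneg h2, abs_of_nonneg (by linarith : (0:ℝ) ≤ b - a)]
    exact h1
  rcases le_total x y with h | h
  · have h' := key x y hx h hyM
    rw [abs_sub_comm (y^d) (x^d), abs_sub_comm y x] at h'
    exact h'
  · exact key y x hy h hxM

/-- lower bound: leading coefficient 1, nonneg coefficients. -/
lemma sum_lb {f : ℕ → ℝ} {x : ℝ} {n : ℕ} (hf : ∀ d, 0 ≤ f d) (hfn : f (n-1) = 1)
    (hx : 0 ≤ x) (hn : 1 ≤ n) :
    x ^ (n-1) ≤ ∑ d ∈ range n, f d * x ^ d := by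
  have hmem : n - 1 ∈ range n := by simp; omega
  have h := Finset.single_le_sum (f := fun d => f d * x ^ d)
    (fun d _ => by have := hf d; positivity) hmem
  simp only [hfn, one_mul] at h
  exact h

lemma sum_ub {f : ℕ → ℝ} {x : ℝ} {n : ℕ} (hf : ∀ d, 0 ≤ f d ∧ f d ≤ 1)
    (hx : (3:ℝ)/2 ≤ x) (hn : 1 ≤ n) :
    ∑ d ∈ range n, f d * x ^ d ≤ 3 * x ^ (n-1) := by
  calc ∑ d ∈ range n, f d * x ^ d ≤ ∑ d ∈ range n, x ^ d := by
        apply Finset.sum_le_sum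
        intro d _
        have hxp : (0:ℝ) ≤ x ^ d := by positivity
        nlinarith [(hf d).1, (hf d).2]
    _ ≤ 3 * x ^ (n-1) := geom3 hx n hn

lemma sum_nonneg' {f : ℕ → ℝ} {x : ℝ} {n : ℕ} (hf : ∀ d, 0 ≤ f d) (hx : 0 ≤ x) :
    0 ≤ ∑ d ∈ range n, f d * x ^ d :=
  Finset.sum_nonneg (fun d _ => by have := hf d; positivity)

lemma sumT_ub {f : ℕ → ℝ} {x : ℝ} {n : ℕ} (hf : ∀ d, 0 ≤ f d ∧ f d ≤ 1)
    (hx : (3:ℝ)/2 ≤ x) (hn : 1 ≤ n) :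
    ∑ d ∈ range n, f d * (d * x ^ (d-1)) ≤ 3 * n * x ^ (n-1) := by
  have hx1 : (1:ℝ) ≤ x := by linarith
  calc ∑ d ∈ range n, f d * (d * x ^ (d-1)) ≤ ∑ d ∈ range n, n * x ^ d := by
        apply Finset.sum_le_sum
        intro d hd
        have hdn : (d:ℝ) ≤ n := by
          have := Finset.mem_range.mp hd; exact_mod_cast le_of_lt this
        have hpow : x ^ (d-1) ≤ x ^ d := pow_le_pow_right₀ hx1 (by omega)
        have hxp : (0:ℝ) ≤ x ^ (d-1) := by positivity
        have h1 : f d * (d * x ^ (d-1)) ≤ 1 * (d * x ^ (d-1)) := by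
          apply mul_le_mul_of_nonneg_right (hf d).2 (by positivity)
        have h2 : (d:ℝ) * x ^ (d-1) ≤ n * x ^ d := by
          apply mul_le_mul hdn hpow hxp (by positivity)
        linarith
    _ = n * ∑ d ∈ range n, x ^ d := by rw [Finset.mul_sum]
    _ ≤ n * (3 * x ^ (n-1)) := by
        apply mul_le_mul_of_nonneg_left (geom3 hx n hn) (by positivity)
    _ = 3 * n * x ^ (n-1) := by ring

lemma sumT_nonneg {f : ℕ → ℝ} {x : ℝ} {n : ℕ} (hf : ∀ d, 0 ≤ f d) (hx : 0 ≤ x) :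
    0 ≤ ∑ d ∈ range n, f d * (d * x ^ (d-1)) :=
  Finset.sum_nonneg (fun d _ => by have := hf d; positivity)

lemma sum_diff {f : ℕ → ℝ} {F x y M : ℝ} {n : ℕ} (hf : ∀ d, |f d| ≤ F)
    (hx : 0 ≤ x) (hxM : x ≤ M) (hy : 0 ≤ y) (hyM : y ≤ M) (hM : (3:ℝ)/2 ≤ M) (hn : 1 ≤ n) :
    |∑ d ∈ range n, f d * x ^ d - ∑ d ∈ range n, f d * y ^ d| ≤
      3 * F * n * M ^ (n-1) * |x - y| := by
  have hF : 0 ≤ F := le_trans (abs_nonneg _) (hf 0)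
  rw [← Finset.sum_sub_distrib]
  calc |∑ d ∈ range n, (f d * x ^ d - f d * y ^ d)|
      ≤ ∑ d ∈ range n, |f d * x ^ d - f d * y ^ d| := Finset.abs_sum_le_sum_abs _ _
    _ ≤ ∑ d ∈ range n, F * (n * M ^ d * |x - y|) := by
        apply Finset.sum_le_sum
        intro d hd
        have hdn : (d:ℝ) ≤ n := by
          have := Finset.mem_range.mp hd; exact_mod_cast le_of_lt this
        rw [← mul_sub, abs_mul]
        have h1 : |x ^ d - y ^ d| ≤ d * M ^ (d-1) * |x - y| :=
          pow_diff_abs hx hxM hy hyM d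
        have hM1 : (1:ℝ) ≤ M := by linarith
        have h2 : (d:ℝ) * M ^ (d-1) * |x-y| ≤ n * M ^ d * |x-y| := by
          apply mul_le_mul_of_nonneg_right _ (abs_nonneg _)
          apply mul_le_mul hdn (pow_le_pow_right₀ hM1 (by omega)) (by positivity) (by positivity)
        calc |f d| * |x ^ d - y ^ d| ≤ F * |x^d - y^d| :=
              mul_le_mul_of_nonneg_right (hf d) (abs_nonneg _)
          _ ≤ F * (↑n * M ^ d * |x - y|) := by
              apply mul_le_mul_of_nonneg_left (le_trans h1 h2) hF
    _ = F * n * |x-y| * ∑ d ∈ range n, M ^ d := by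
        rw [Finset.mul_sum]; apply Finset.sum_congr rfl; intros; ring
    _ ≤ F * n * |x-y| * (3 * M ^ (n-1)) := by
        apply mul_le_mul_of_nonneg_left (geom3 hM n hn) (by positivity)
    _ = 3 * F * n * M ^ (n-1) * |x - y| := by ring

lemma sumT_diff {f : ℕ → ℝ} {F x y M : ℝ} {n : ℕ} (hf : ∀ d, |f d| ≤ F)
    (hx : 0 ≤ x) (hxM : x ≤ M) (hy : 0 ≤ y) (hyM : y ≤ M) (hM : (3:ℝ)/2 ≤ M) (hn : 1 ≤ n) :
    |∑ d ∈ range n, f d * (d * x ^ (d-1)) - ∑ d ∈ range n, f d * (d * y ^ (d-1))| ≤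
      3 * F * n^2 * M ^ (n-1) * |x - y| := by
  have hF : 0 ≤ F := le_trans (abs_nonneg _) (hf 0)
  have hM1 : (1:ℝ) ≤ M := by linarith
  rw [← Finset.sum_sub_distrib]
  calc |∑ d ∈ range n, (f d * (d * x ^ (d-1)) - f d * (d * y ^ (d-1)))|
      ≤ ∑ d ∈ range n, |f d * (d * x ^ (d-1)) - f d * (d * y ^ (d-1))| :=
        Finset.abs_sum_le_sum_abs _ _
    _ ≤ ∑ d ∈ range n, F * (n^2 * M ^ d * |x - y|) := by
        apply Finset.sum_le_sum
        intro d hd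
        have hdn : (d:ℝ) ≤ n := by
          have := Finset.mem_range.mp hd; exact_mod_cast le_of_lt this
        have hdnn : (0:ℝ) ≤ (d:ℝ) := by positivity
        have heq : f d * (d * x ^ (d-1)) - f d * (d * y ^ (d-1))
            = f d * d * (x ^ (d-1) - y ^ (d-1)) := by ring
        rw [heq, abs_mul]
        have h1 : |x ^ (d-1) - y ^ (d-1)| ≤ (d-1 : ℕ) * M ^ (d-1-1) * |x - y| :=
          pow_diff_abs hx hxM hy hyM (d-1)
        have h2 : ((d-1:ℕ):ℝ) * M ^ (d-1-1) * |x - y| ≤ n * M ^ d * |x-y| := by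
          apply mul_le_mul_of_nonneg_right _ (abs_nonneg _)
          apply mul_le_mul _ (pow_le_pow_right₀ hM1 (by omega)) (by positivity) (by positivity)
          · calc ((d-1:ℕ):ℝ) ≤ (d:ℝ) := by exact_mod_cast Nat.sub_le d 1
              _ ≤ n := hdn
        have h3 : |f d * ↑d| ≤ F * n := by
          rw [abs_mul, abs_of_nonneg hdnn]
          apply mul_le_mul (hf d) hdn hdnn hF
        calc |f d * ↑d| * |x ^ (d-1) - y ^ (d-1)| ≤ (F * n) * (n * M ^ d * |x-y|) := by
              apply mul_le_mul h3 (le_trans h1 h2) (abs_nonneg _) (by positivity)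
          _ = F * (n^2 * M ^ d * |x-y|) := by ring
    _ = F * n^2 * |x-y| * ∑ d ∈ range n, M ^ d := by
        rw [Finset.mul_sum]; apply Finset.sum_congr rfl; intros; ring
    _ ≤ F * n^2 * |x-y| * (3 * M ^ (n-1)) := by
        apply mul_le_mul_of_nonneg_left (geom3 hM n hn) (by positivity)
    _ = 3 * F * n^2 * M ^ (n-1) * |x - y| := by ring

/-- abs bound for bounded-coefficient sums -/
lemma sum_abs_ub {g : ℕ → ℝ} {x : ℝ} {n : ℕ} (hg : ∀ d, |g d| ≤ 1)
    (hx : (3:ℝ)/2 ≤ x) (hn : 1 ≤ n) :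
    |∑ d ∈ range n, g d * x ^ d| ≤ 3 * x ^ (n-1) := by
  calc |∑ d ∈ range n, g d * x ^ d| ≤ ∑ d ∈ range n, |g d * x ^ d| :=
        Finset.abs_sum_le_sum_abs _ _
    _ ≤ ∑ d ∈ range n, x ^ d := by
        apply Finset.sum_le_sum
        intro d _
        rw [abs_mul, abs_of_nonneg (by positivity : (0:ℝ) ≤ x ^ d)]
        nlinarith [hg d, abs_nonneg (g d), pow_nonneg (by linarith : (0:ℝ) ≤ x) d]
    _ ≤ 3 * x ^ (n-1) := geom3 hx n hn

lemma sumT_abs_ub {g : ℕ → ℝ} {x : ℝ} {n : ℕ} (hg : ∀ d, |g d| ≤ 1)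
    (hx : (3:ℝ)/2 ≤ x) (hn : 1 ≤ n) :
    |∑ d ∈ range n, g d * (d * x ^ (d-1))| ≤ 3 * n * x ^ (n-1) := by
  have hx1 : (1:ℝ) ≤ x := by linarith
  calc |∑ d ∈ range n, g d * (d * x ^ (d-1))|
      ≤ ∑ d ∈ range n, |g d * (d * x ^ (d-1))| := Finset.abs_sum_le_sum_abs _ _
    _ ≤ ∑ d ∈ range n, n * x ^ d := by
        apply Finset.sum_le_sum
        intro d hd
        have hdn : (d:ℝ) ≤ n := by
          have := Finset.mem_range.mp hd; exact_mod_cast le_of_lt this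
        rw [abs_mul, abs_of_nonneg (by positivity : (0:ℝ) ≤ (d:ℝ) * x ^ (d-1))]
        have hpow : x ^ (d-1) ≤ x ^ d := pow_le_pow_right₀ hx1 (by omega)
        have h1 : |g d| * ((d:ℝ) * x ^ (d-1)) ≤ 1 * ((d:ℝ) * x ^ (d-1)) :=
          mul_le_mul_of_nonneg_right (hg d) (by positivity)
        have h2 : (d:ℝ) * x ^ (d-1) ≤ (n:ℝ) * x ^ d :=
          mul_le_mul hdn hpow (by positivity) (by positivity)
        linarith
    _ = n * ∑ d ∈ range n, x ^ d := by rw [Finset.mul_sum]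
    _ ≤ n * (3 * x ^ (n-1)) :=
        mul_le_mul_of_nonneg_left (geom3 hx n hn) (by positivity)
    _ = 3 * n * x ^ (n-1) := by ring

/-- restrict a sum to the support below t -/
lemma support_shrink {g : ℕ → ℝ} {k t : ℕ} (h : ∀ d, t < d → d < k → g d = 0)
    (htk : t + 1 ≤ k) (F : ℕ → ℝ) :
    ∑ d ∈ range k, g d * F d = ∑ d ∈ range (t+1), g d * F d := by
  symm
  apply Finset.sum_subset
  · intro d hd; simp only [Finset.mem_range] at hd ⊢; omega
  · intro d hd hnd
    simp only [Finset.mem_range] at hd hnd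
    rw [h d (by omega) hd, zero_mul]

/-- top-digit comparison: if bits agree above t, bit t is (1,0), then difference of values ≥ 1. -/
lemma topdiff {x : ℝ} (hx : (2:ℝ) ≤ x) {γ γ' : ℕ → ℝ}
    (hγ : ∀ d, γ d = 0 ∨ γ d = 1) (hγ' : ∀ d, γ' d = 0 ∨ γ' d = 1)
    {k t : ℕ} (htk : t < k) (h1 : γ t = 1) (h0 : γ' t = 0)
    (hag : ∀ d, t < d → d < k → γ d = γ' d) :
    1 ≤ ∑ d ∈ range k, γ d * x ^ d - ∑ d ∈ range k, γ' d * x ^ d := by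
  have hsub : ∑ d ∈ range k, (γ d - γ' d) * x ^ d = ∑ d ∈ range (t+1), (γ d - γ' d) * x ^ d := by
    symm
    apply Finset.sum_subset
    · intro d hd; simp at hd ⊢; omega
    · intro d hd hnd
      simp at hd hnd
      rw [hag d (by omega) hd]; ring
  have hsplit : ∑ d ∈ range (t+1), (γ d - γ' d) * x ^ d
      = ∑ d ∈ range t, (γ d - γ' d) * x ^ d + (γ t - γ' t) * x ^ t :=
    Finset.sum_range_succ _ t
  have hlow : ∑ d ∈ range t, (γ d - γ' d) * x ^ d ≥ -(x ^ t - 1) := by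
    have h1' : ∑ d ∈ range t, (γ d - γ' d) * x ^ d ≥ ∑ d ∈ range t, (-1) * x ^ d := by
      apply Finset.sum_le_sum
      intro d _
      have hxp : (0:ℝ) ≤ x ^ d := by positivity
      rcases hγ d with h | h <;> rcases hγ' d with h' | h' <;> rw [h, h'] <;> nlinarith
    have h2' : ∑ d ∈ range t, (-1:ℝ) * x ^ d = -∑ d ∈ range t, x ^ d := by
      rw [← Finset.sum_neg_distrib]; apply Finset.sum_congr rfl; intros; ring
    have := geom_lt hx t
    rw [h2'] at h1'
    linarith
  have hxt : (1:ℝ) ≤ x ^ t := one_le_pow₀ (by linarith)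
  have hfin : (1:ℝ) ≤ ∑ d ∈ range k, (γ d - γ' d) * x ^ d := by
    rw [hsub, hsplit, h1, h0]
    have : (1 - 0) * x ^ t = x ^ t := by ring
    rw [this]
    linarith
  have : ∑ d ∈ range k, (γ d - γ' d) * x ^ d
      = ∑ d ∈ range k, γ d * x ^ d - ∑ d ∈ range k, γ' d * x ^ d := by
    rw [← Finset.sum_sub_distrib]; apply Finset.sum_congr rfl; intros; ring
  linarith [this ▸ hfin]


section FW
variable {γ : Type*}

/-- multiples of a period are periods. -/
lemma per_mult (f : ℕ → γ) (k p : ℕ) (h : ∀ i, i + p < k → f i = f (i + p)) :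
    ∀ m i, i + m * p < k → f i = f (i + m * p) := by
  intro m
  induction m with
  | zero => intro i _; simp
  | succ n ih =>
    intro i hi
    have hp : i + p ≤ i + (n+1) * p := by nlinarith [Nat.zero_le (n*p)]
    have h1 : f i = f (i + p) := h i (by omega)
    have h2 : f (i + p) = f (i + p + n * p) := ih (i + p) (by nlinarith)
    have he : i + p + n * p = i + (n+1) * p := by ring
    rw [h1, h2, he]

/-- Fine–Wilf: two periods summing to at most the length have their gcd as period. -/
lemma fine_wilf (f : ℕ → γ) (k : ℕ) :
    ∀ n p p', p + p' ≤ n → 0 < p → 0 < p' → p + p' ≤ k →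
    (∀ i, i + p < k → f i = f (i + p)) → (∀ i, i + p' < k → f i = f (i + p')) →
    ∀ i, i + Nat.gcd p p' < k → f i = f (i + Nat.gcd p p') := by
  intro n
  induction n with
  | zero => intro p p' hn hp; omega
  | succ N ih =>
    intro p p' hn hp hp' hk h1 h2
    rcases lt_trichotomy p p' with hlt | heq | hgt
    · -- p < p' ; r := p' - p is a period
      have hr : 0 < p' - p := by omega
      have h3 : ∀ i, i + (p' - p) < k → f i = f (i + (p' - p)) := by
        intro i hi
        by_cases hc : i + p' < k
        · have e1 : f i = f (i + p') := h2 i hc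
          have e2 : f (i + (p' - p)) = f (i + (p' - p) + p) := h1 (i + (p' - p)) (by omega)
          have he : i + (p' - p) + p = i + p' := by omega
          rw [e1, ← he, ← e2]
        · have hip : p ≤ i := by omega
          have e1 : f (i - p) = f (i - p + p) := h1 (i - p) (by omega)
          have e2 : f (i - p) = f (i - p + p') := h2 (i - p) (by omega)
          have he1 : i - p + p = i := by omega
          have he2 : i - p + p' = i + (p' - p) := by omega
          rw [he1] at e1
          rw [he2] at e2
          rw [← e1, e2]
      have hg : Nat.gcd p (p' - p) = Nat.gcd p p' := by
        apply Nat.dvd_antisymm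
        · apply Nat.dvd_gcd (Nat.gcd_dvd_left _ _)
          have d1 := Nat.gcd_dvd_left p (p' - p)
          have d2 := Nat.gcd_dvd_right p (p' - p)
          have := Nat.dvd_add d2 d1
          rwa [Nat.sub_add_cancel (le_of_lt hlt)] at this
        · exact Nat.dvd_gcd (Nat.gcd_dvd_left _ _)
            (Nat.dvd_sub (Nat.gcd_dvd_right _ _) (Nat.gcd_dvd_left _ _))
      have := ih p (p' - p) (by omega) hp hr (by omega) h1 h3
      rw [hg] at this
      exact this
    · subst heq
      rw [Nat.gcd_self]
      exact h1
    · -- p' < p : symmetric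
      have hr : 0 < p - p' := by omega
      have h3 : ∀ i, i + (p - p') < k → f i = f (i + (p - p')) := by
        intro i hi
        by_cases hc : i + p < k
        · have e1 : f i = f (i + p) := h1 i hc
          have e2 : f (i + (p - p')) = f (i + (p - p') + p') := h2 (i + (p - p')) (by omega)
          have he : i + (p - p') + p' = i + p := by omega
          rw [e1, ← he, ← e2]
        · have hip : p' ≤ i := by omega
          have e1 : f (i - p') = f (i - p' + p') := h2 (i - p') (by omega)
          have e2 : f (i - p') = f (i - p' + p) := h1 (i - p') (by omega)
          have he1 : i - p' + p' = i := by omega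
          have he2 : i - p' + p = i + (p - p') := by omega
          rw [he1] at e1
          rw [he2] at e2
          rw [← e1, e2]
      have hg : Nat.gcd (p - p') p' = Nat.gcd p p' := by
        apply Nat.dvd_antisymm
        · apply Nat.dvd_gcd _ (Nat.gcd_dvd_right _ _)
          have d1 := Nat.gcd_dvd_left (p - p') p'
          have d2 := Nat.gcd_dvd_right (p - p') p'
          have := Nat.dvd_add d1 d2
          rwa [Nat.sub_add_cancel (le_of_lt hgt)] at this
        · exact Nat.dvd_gcd
            (Nat.dvd_sub (Nat.gcd_dvd_left _ _) (Nat.gcd_dvd_right _ _))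
            (Nat.gcd_dvd_right _ _)
      have := ih (p - p') p' (by omega) hr hp' (by omega) h3 h2
      rw [hg] at this
      exact this

end FW

section Words
variable {σ : Type*} [DecidableEq σ] [Inhabited σ]

/-- pointwise reading of a word -/
noncomputable def wf (w : List σ) : ℕ → σ := fun i => w.getD i default

/-- `p` is a period of `w` -/
def HasPer (w : List σ) (p : ℕ) : Prop := w.take (w.length - p) = w.drop p

lemma hasPer_iff {w : List σ} {p : ℕ} (hp : p ≤ w.length) :
    HasPer w p ↔ ∀ i, i + p < w.length → wf w i = wf w (i + p) := by
  unfold HasPer wf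
  constructor
  · intro h i hi
    have h1 : i < (w.take (w.length - p)).length := by
      rw [List.length_take]; omega
    have h2 : i < (w.drop p).length := by
      rw [List.length_drop]; omega
    have := congrArg (fun l => l.getD i default) h
    rw [List.getD_eq_getElem _ _ h1, List.getD_eq_getElem _ _ h2,
      List.getElem_take, List.getElem_drop] at this
    rw [List.getD_eq_getElem _ _ (by omega : i < w.length),
      List.getD_eq_getElem _ _ (by omega : i + p < w.length)]
    rw [this]
    congr 1
    omega
  · intro h
    apply List.ext_getElem
    · rw [List.length_take, List.length_drop]; omega
    · intro n h1 h2
      rw [List.getElem_take, List.getElem_drop]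
      have hn : n + p < w.length := by
        rw [List.length_take] at h1; omega
      have := h n hn
      rw [List.getD_eq_getElem _ _ (by omega : n < w.length),
        List.getD_eq_getElem _ _ hn] at this
      have he : w[n + p] = w[p + n] := by
        congr 1
        omega
      rw [← he]
      exact this

/-- acorrBit in terms of periods: bit at degree d (position d+1) is 1 iff k-1-d is a period. -/
lemma acorrBit_eq_one_iff {w : List σ} {d : ℕ} (hd : d < w.length) :
    acorrBit w (d + 1) = 1 ↔ HasPer w (w.length - 1 - d) := by
  unfold acorrBit HasPer
  have h1 : w.length - (w.length - 1 - d) = d + 1 := by omega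
  rw [h1]
  constructor
  · intro h
    by_cases hc : w.take (d+1) = w.drop (w.length - (d+1))
    · rw [show w.length - 1 - d = w.length - (d+1) by omega]
      exact hc
    · rw [if_neg hc] at h; exact absurd h one_ne_zero.symm
  · intro h
    rw [show w.length - (d+1) = w.length - 1 - d by omega]
    rw [if_pos h]

lemma acorrBit_zero_or_one {w : List σ} (i : ℕ) : acorrBit w i = 0 ∨ acorrBit w i = 1 := by
  unfold acorrBit; split <;> simp

lemma acorrBit_top {w : List σ} (h : 1 ≤ w.length) : acorrBit w w.length = 1 := by
  unfold acorrBit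
  rw [Nat.sub_self, List.take_length, List.drop_zero, if_pos rfl]


/-- the set of nontrivial periods up to B -/
def PerSet (v : List σ) (B : ℕ) : Set ℕ := {p | 1 ≤ p ∧ p ≤ B ∧ HasPer v p}

lemma per_gcd {v : List σ} {B : ℕ} (h2B : 2 * B ≤ v.length)
    {p p' : ℕ} (hp : p ∈ PerSet v B) (hp' : p' ∈ PerSet v B) :
    Nat.gcd p p' ∈ PerSet v B := by
  obtain ⟨hp1, hpB, hper⟩ := hp
  obtain ⟨hp1', hpB', hper'⟩ := hp'
  have hg1 : 1 ≤ Nat.gcd p p' := Nat.gcd_pos_of_pos_left _ (by omega)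
  have hgB : Nat.gcd p p' ≤ B :=
    le_trans (Nat.le_of_dvd (by omega) (Nat.gcd_dvd_left p p')) hpB
  refine ⟨hg1, hgB, ?_⟩
  rw [hasPer_iff (by omega)]
  have h1 := (hasPer_iff (by omega : p ≤ v.length)).mp hper
  have h2 := (hasPer_iff (by omega : p' ≤ v.length)).mp hper'
  exact fine_wilf (wf v) v.length (p + p') p p' le_rfl (by omega) (by omega) (by omega) h1 h2

lemma min_per_dvd {v : List σ} {B : ℕ} (h2B : 2 * B ≤ v.length)
    {p : ℕ} (hp : p ∈ PerSet v B) : sInf (PerSet v B) ∣ p := by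
  have hne : (PerSet v B).Nonempty := ⟨p, hp⟩
  have hmem : sInf (PerSet v B) ∈ PerSet v B := Nat.sInf_mem hne
  have hgcd : Nat.gcd (sInf (PerSet v B)) p ∈ PerSet v B := per_gcd h2B hmem hp
  have hle : sInf (PerSet v B) ≤ Nat.gcd (sInf (PerSet v B)) p := Nat.sInf_le hgcd
  have hge : Nat.gcd (sInf (PerSet v B)) p ≤ sInf (PerSet v B) := by
    have h1 := hmem.1
    exact Nat.le_of_dvd (by omega) (Nat.gcd_dvd_left _ _)
  have heq : Nat.gcd (sInf (PerSet v B)) p = sInf (PerSet v B) := le_antisymm hge hle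
  have := Nat.gcd_dvd_right (sInf (PerSet v B)) p
  rwa [heq] at this

lemma per_of_mult {v : List σ} {p m : ℕ} (hper : HasPer v p) (hp : p ≤ v.length)
    (hm : m * p ≤ v.length) : HasPer v (m * p) := by
  rw [hasPer_iff (by omega)]
  have h1 := (hasPer_iff hp).mp hper
  intro i hi
  exact per_mult (wf v) v.length p (fun j hj => h1 j hj) m i hi

lemma mult_mem_perSet {v : List σ} {B : ℕ} (h2B : 2 * B ≤ v.length)
    {m : ℕ} (hne : (PerSet v B).Nonempty) (hm1 : 1 ≤ m)
    (hmB : m * sInf (PerSet v B) ≤ B) : m * sInf (PerSet v B) ∈ PerSet v B := by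
  have hmem : sInf (PerSet v B) ∈ PerSet v B := Nat.sInf_mem hne
  obtain ⟨h1, hB, hper⟩ := hmem
  exact ⟨by nlinarith, hmB, per_of_mult hper (by omega) (by omega)⟩

end Words


lemma sum_ite_lt (g : ℕ → ℝ) {m t : ℕ} (h : m ≤ t) :
    ∑ d ∈ range t, (if d < m then g d else 0) = ∑ d ∈ range m, g d := by
  rw [← Finset.sum_filter]
  congr 1
  ext d
  simp only [Finset.mem_filter, Finset.mem_range]
  omega

lemma quarter_geom (n : ℕ) : ∑ j ∈ range n, ((1:ℝ)/4) ^ j ≤ 4/3 := by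
  have h : ((1:ℝ)/4) ≠ 1 := by norm_num
  rw [geom_sum_eq h]
  have h1 : (0:ℝ) ≤ (1/4:ℝ)^n := by positivity
  have h2 : ((1:ℝ)/4)^n ≤ 1 := pow_le_one₀ (by norm_num) (by norm_num)
  rw [div_le_iff_of_neg (by norm_num : (1:ℝ)/4 - 1 < 0)]
  nlinarith


lemma low_deg_sum {r : ℝ} (hr : 2 ≤ r) {m t : ℕ} (hmt : m + 3 ≤ t) :
    ∑ d ∈ range t, (if d < m then r^d else 0) ≤ (1/8) * r^t := by
  have hr1 : (1:ℝ) ≤ r := by linarith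
  have hr0 : (0:ℝ) < r := by linarith
  rw [sum_ite_lt (fun d => r^d) (by omega : m ≤ t)]
  have h1 := geom_lt hr m
  have h2 : r^m ≤ r^(t-3) := pow_le_pow_right₀ hr1 (by omega)
  have h3 : r^(t-3) * 8 ≤ r^t := by
    have he : r^(t-3) * r^3 = r^t := by
      rw [← pow_add]; congr 1; omega
    nlinarith [pow_pos hr0 (t-3), pow_le_pow_left₀ (by norm_num : (0:ℝ) ≤ 2) hr 3]
  linarith

set_option maxHeartbeats 800000 in
lemma struct_sum {r : ℝ} (hr : 2 ≤ r) {k t P' : ℕ} (h1 : 1 ≤ t) (h2 : t + 2 ≤ k)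
    (hP'2 : 2 ≤ P') (hlow : k - t ≤ P') :
    ∑ d ∈ range t, (if P' ∣ (k-1-d) then r^d else 0) ≤ (2/3) * r^t := by
  have hr1 : (1:ℝ) ≤ r := by linarith
  have hr0 : (0:ℝ) < r := by linarith
  rw [← Finset.sum_filter]
  set M := (k-1) / P' with hM
  set e : ℕ → ℕ := fun j => k - 1 - (j+1) * P' with he
  have hsubF : (range t).filter (fun d => P' ∣ (k-1-d)) ⊆ (range M).image e := by
    intro d hdF
    simp only [Finset.mem_filter, Finset.mem_range] at hdF
    obtain ⟨hdt, hdvd⟩ := hdF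
    have hkd1 : 1 ≤ k-1-d := by omega
    set m := (k-1-d) / P' with hm
    have hmP : m * P' = k-1-d := Nat.div_mul_cancel hdvd
    have hm1 : 1 ≤ m := by
      rcases Nat.eq_zero_or_pos m with h | h
      · exfalso; rw [h, zero_mul] at hmP; omega
      · exact h
    have hmM : m ≤ M := by
      rw [hm, hM]
      exact Nat.div_le_div_right (by omega)
    simp only [Finset.mem_image, Finset.mem_range]
    exact ⟨m - 1, by omega, by simp only [he]; rw [show m-1+1 = m by omega]; omega⟩
  have hnonneg : ∀ x ∈ (range M).image e,
      x ∉ (range t).filter (fun d => P' ∣ (k-1-d)) → (0:ℝ) ≤ r^x := by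
    intro x _ _; positivity
  have hinj : ∀ x ∈ range M, ∀ y ∈ range M, e x = e y → x = y := by
    intro x hx y hy hxy
    simp only [Finset.mem_range] at hx hy
    simp only [he] at hxy
    have hxP : (x+1) * P' ≤ k-1 := by
      calc (x+1) * P' ≤ M * P' := by
            apply Nat.mul_le_mul_right; omega
        _ ≤ k-1 := Nat.div_mul_le_self _ _
    have hyP : (y+1) * P' ≤ k-1 := by
      calc (y+1) * P' ≤ M * P' := by
            apply Nat.mul_le_mul_right; omega
        _ ≤ k-1 := Nat.div_mul_le_self _ _
    have hab : (x+1) * P' = (y+1) * P' := by omega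
    have := Nat.eq_of_mul_eq_mul_right (by omega : 0 < P') hab
    omega
  calc ∑ d ∈ (range t).filter (fun d => P' ∣ (k-1-d)), r^d
      ≤ ∑ x ∈ (range M).image e, r^x :=
        Finset.sum_le_sum_of_subset_of_nonneg hsubF hnonneg
    _ = ∑ j ∈ range M, r^(e j) := Finset.sum_image hinj
    _ ≤ ∑ j ∈ range M, r^(k-1-P') * ((1:ℝ)/4)^j := by
        apply Finset.sum_le_sum
        intro j hj
        simp only [Finset.mem_range] at hj
        have hjP : (j+1) * P' ≤ k-1 := by
          calc (j+1) * P' ≤ M * P' := by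
                apply Nat.mul_le_mul_right; omega
            _ ≤ k-1 := Nat.div_mul_le_self _ _
        have hexp : (k - 1 - (j+1) * P') + 2*j ≤ k-1-P' := by
          have hjj : 2*j ≤ j * P' := by nlinarith
          have hsucc : (j+1) * P' = j * P' + P' := by ring
          omega
        have h4 : ((4:ℝ))^j ≤ r^(2*j) := by
          rw [pow_mul]
          apply pow_le_pow_left₀ (by norm_num)
          nlinarith
        have hmul : r^(e j) * (4:ℝ)^j ≤ r^(k-1-P') := by
          calc r^(e j) * (4:ℝ)^j ≤ r^(e j) * r^(2*j) := by
                apply mul_le_mul_of_nonneg_left h4 (by positivity)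
            _ = r^(e j + 2*j) := by rw [← pow_add]
            _ ≤ r^(k-1-P') := pow_le_pow_right₀ hr1 (by simp only [he]; omega)
        have h14 : ((1:ℝ)/4)^j * (4:ℝ)^j = 1 := by
          rw [← mul_pow]; norm_num
        have h0 : (0:ℝ) ≤ ((1:ℝ)/4)^j := by positivity
        have h2' := mul_le_mul_of_nonneg_left hmul h0
        calc r^(e j) = ((1:ℝ)/4)^j * (4:ℝ)^j * r^(e j) := by rw [h14, one_mul]
          _ = ((1:ℝ)/4)^j * (r^(e j) * (4:ℝ)^j) := by ring
          _ ≤ ((1:ℝ)/4)^j * r^(k-1-P') := h2'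
          _ = r^(k-1-P') * ((1:ℝ)/4)^j := by ring
    _ = r^(k-1-P') * ∑ j ∈ range M, ((1:ℝ)/4)^j := by rw [Finset.mul_sum]
    _ ≤ r^(k-1-P') * (4/3) := by
        apply mul_le_mul_of_nonneg_left (quarter_geom M) (by positivity)
    _ ≤ (2/3) * r^t := by
        have hh1 : r^(k-1-P') ≤ r^(t-1) := pow_le_pow_right₀ hr1 (by omega)
        have hh2 : r^(t-1) * r ≤ r^t * 1 := by
          rw [← pow_succ, show t-1+1 = t by omega, mul_one]
        have hh3 : (0:ℝ) < r^(t-1) := pow_pos hr0 _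
        nlinarith [pow_pos hr0 t]

section KeyLemma

set_option maxHeartbeats 2000000 in
lemma key {q k t : ℕ} (hq : 2 ≤ q) (hk : 100 ≤ k) (w w' : List (Fin q))
    (hw : w.length = k) (hw' : w'.length = k)
    (ht : t ≤ k - 2)
    (hbt : acorrBit w (t+1) = 1) (hbt' : acorrBit w' (t+1) = 0)
    (hagree : ∀ d, t < d → d < k → acorrBit w (d+1) = acorrBit w' (d+1))
    (hD1 : (1:ℝ) ≤ ∑ d ∈ range k,
      ((acorrBit w (d+1) : ℝ) - (acorrBit w' (d+1) : ℝ)) * (q:ℝ)^d) :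
    (q:ℝ)^t ≤ 12 * (∑ d ∈ range k,
      ((acorrBit w (d+1) : ℝ) - (acorrBit w' (d+1) : ℝ)) * (q:ℝ)^d)
      * (q:ℝ)^(k - (k/3+1) + 2) := by
  haveI : Inhabited (Fin q) := ⟨⟨0, by omega⟩⟩
  set r : ℝ := (q:ℝ) with hrdef
  have hr : (2:ℝ) ≤ r := by rw [hrdef]; exact_mod_cast hq
  have hr1 : (1:ℝ) ≤ r := by linarith
  have hr0 : (0:ℝ) < r := by linarith
  set B := k/3 + 1 with hB
  set c : ℕ → ℝ := fun d => (acorrBit w (d+1) : ℝ) - (acorrBit w' (d+1) : ℝ) with hc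
  set D := ∑ d ∈ range k, c d * r^d with hD
  have hpow1 : (1:ℝ) ≤ r ^ (k - B + 2) := one_le_pow₀ hr1
  by_cases hcase : t + B ≤ k + 1
  · -- easy case : t ≤ k - B + 1
    have h1 : r^t ≤ r^(k - B + 2) := pow_le_pow_right₀ hr1 (by omega)
    nlinarith [pow_pos hr0 (k - B + 2)]
  · -- hard case : t ≥ k - B + 2
    have hkB : k - B + 2 ≤ t := by omega
    have h2B : 2 * B ≤ w.length := by rw [hw]; omega
    have h2B' : 2 * B ≤ w'.length := by rw [hw']; omega
    -- bit ↔ period bridges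
    have bit1 : ∀ d, d < k → (acorrBit w (d+1) = 1 ↔ HasPer w (k-1-d)) := by
      intro d hd
      have := acorrBit_eq_one_iff (w := w) (d := d) (by omega)
      rwa [hw] at this
    have bit1' : ∀ d, d < k → (acorrBit w' (d+1) = 1 ↔ HasPer w' (k-1-d)) := by
      intro d hd
      have := acorrBit_eq_one_iff (w := w') (d := d) (by omega)
      rwa [hw'] at this
    set pt := k - 1 - t with hptd
    have hpt1 : 1 ≤ pt := by omega
    have hptB : pt + 3 ≤ B := by omega
    have hperpt : HasPer w pt := (bit1 t (by omega)).mp hbt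
    have hptmem : pt ∈ PerSet w B := ⟨by omega, by omega, hperpt⟩
    have hSwne : (PerSet w B).Nonempty := ⟨pt, hptmem⟩
    set p₀ := sInf (PerSet w B) with hp₀d
    have hp₀mem : p₀ ∈ PerSet w B := Nat.sInf_mem hSwne
    obtain ⟨hp₀1, hp₀B, hp₀per⟩ := hp₀mem
    have hp₀le : p₀ ≤ pt := Nat.sInf_le hptmem
    -- Claim 2 : p₀ = pt
    have hp₀pt : p₀ = pt := by
      by_contra hne
      have hlt : p₀ < pt := by omega
      set d₀ := k - 1 - p₀ with hd₀d
      have hd₀t : t < d₀ := by omega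
      have hd₀k : d₀ < k := by omega
      have hb₀ : acorrBit w (d₀+1) = 1 := by
        rw [bit1 d₀ hd₀k, show k-1-d₀ = p₀ by omega]
        exact hp₀per
      have hb₀' : acorrBit w' (d₀+1) = 1 := by rw [← hagree d₀ hd₀t hd₀k]; exact hb₀
      have hperw' : HasPer w' p₀ := by
        have := (bit1' d₀ hd₀k).mp hb₀'
        rwa [show k-1-d₀ = p₀ by omega] at this
      have hp₀mem' : p₀ ∈ PerSet w' B := ⟨by omega, by omega, hperw'⟩
      have hne' : (PerSet w' B).Nonempty := ⟨p₀, hp₀mem'⟩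
      set p₀' := sInf (PerSet w' B) with hp₀'d
      have hp₀'le : p₀' ≤ p₀ := Nat.sInf_le hp₀mem'
      have hp₀'mem : p₀' ∈ PerSet w' B := Nat.sInf_mem hne'
      obtain ⟨hp₀'1, hp₀'B, hp₀'per⟩ := hp₀'mem
      set d₀' := k - 1 - p₀' with hd₀'d
      have hd₀'t : t < d₀' := by omega
      have hd₀'k : d₀' < k := by omega
      have hb' : acorrBit w' (d₀'+1) = 1 := by
        rw [bit1' d₀' hd₀'k, show k-1-d₀' = p₀' by omega]
        exact hp₀'per
      have hb : acorrBit w (d₀'+1) = 1 := by rw [hagree d₀' hd₀'t hd₀'k]; exact hb'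
      have hperw : HasPer w p₀' := by
        have := (bit1 d₀' hd₀'k).mp hb
        rwa [show k-1-d₀' = p₀' by omega] at this
      have hp₀'memw : p₀' ∈ PerSet w B := ⟨by omega, by omega, hperw⟩
      have hle2 : p₀ ≤ p₀' := Nat.sInf_le hp₀'memw
      have heq : p₀' = p₀ := by omega
      have hdvd : p₀ ∣ pt := min_per_dvd h2B hptmem
      obtain ⟨m, hm⟩ := hdvd
      have hm1 : 1 ≤ m := by
        rcases Nat.eq_zero_or_pos m with h | h
        · subst h; omega
        · exact h
      have hmp : m * p₀ = pt := by rw [Nat.mul_comm]; exact hm.symm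
      have hmm : m * p₀' ≤ B := by rw [heq, hmp]; omega
      have hptmem' : m * p₀' ∈ PerSet w' B := mult_mem_perSet h2B' hne' hm1 (by rw [← hp₀'d]; exact hmm)
      have hptper' : HasPer w' pt := by
        have h5 := hptmem'.2.2
        rwa [show m * p₀' = pt by rw [heq]; exact hmp] at h5
      have : acorrBit w' (t+1) = 1 := by
        rw [bit1' t (by omega), show k-1-t = pt from rfl]
        exact hptper'
      omega
    -- Claim 3 : every period of w' up to B exceeds pt
    have hclaim3 : ∀ p'', p'' ∈ PerSet w' B → pt < p'' := by
      intro p'' hmem''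
      by_contra hle''
      push_neg at hle''
      have hne' : (PerSet w' B).Nonempty := ⟨p'', hmem''⟩
      set p₀' := sInf (PerSet w' B) with hp₀'d
      have hp₀'le : p₀' ≤ p'' := Nat.sInf_le hmem''
      have hp₀'mem : p₀' ∈ PerSet w' B := Nat.sInf_mem hne'
      obtain ⟨hp₀'1, hp₀'B, hp₀'per⟩ := hp₀'mem
      have hle3 : p₀' ≤ pt := by omega
      rcases Nat.eq_or_lt_of_le hle3 with heq | hlt
      · have : acorrBit w' (t+1) = 1 := by
          rw [bit1' t (by omega), show k-1-t = pt from rfl, ← heq]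
          exact hp₀'per
        omega
      · set d' := k - 1 - p₀' with hd'd
        have hd't : t < d' := by omega
        have hd'k : d' < k := by omega
        have hb' : acorrBit w' (d'+1) = 1 := by
          rw [bit1' d' hd'k, show k-1-d' = p₀' by omega]
          exact hp₀'per
        have hb : acorrBit w (d'+1) = 1 := by rw [hagree d' hd't hd'k]; exact hb'
        have hperw : HasPer w p₀' := by
          have := (bit1 d' hd'k).mp hb
          rwa [show k-1-d' = p₀' by omega] at this
        have hp₀'memw : p₀' ∈ PerSet w B := ⟨by omega, by omega, hperw⟩
        have := Nat.sInf_le hp₀'memw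
        omega
    -- generic bit facts
    have hbits : ∀ v : List (Fin q), ∀ d : ℕ, acorrBit v d = 0 ∨ acorrBit v d = 1 :=
      fun v d => acorrBit_zero_or_one d
    -- split the sum at t
    have hsub : D = ∑ d ∈ range (t+1), c d * r^d := by
      rw [hD]
      symm
      apply Finset.sum_subset
      · intro d hd; simp only [Finset.mem_range] at hd ⊢; omega
      · intro d hd hnd
        simp only [Finset.mem_range] at hd hnd
        have : acorrBit w (d+1) = acorrBit w' (d+1) := hagree d (by omega) hd
        simp only [hc, this, sub_self, zero_mul]
    have hct : c t = 1 := by simp only [hc, hbt, hbt']; norm_num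
    have hsplit : D = ∑ d ∈ range t, c d * r^d + r^t := by
      rw [hsub, Finset.sum_range_succ, hct, one_mul]
    -- lower bound the low-degree part
    have hlow : -( (1/8) * r^t + (2/3) * r^t ) ≤ ∑ d ∈ range t, c d * r^d := by
      by_cases hSw' : (PerSet w' B).Nonempty
      · -- structured negatives
        set P' := sInf (PerSet w' B) with hP'd
        have hP'mem : P' ∈ PerSet w' B := Nat.sInf_mem hSw'
        have hP'gt : pt < P' := hclaim3 P' hP'mem
        have hP'2 : 2 ≤ P' := by omega
        have hP'B : P' ≤ B := hP'mem.2.1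
        have hP'dvd : ∀ d, d < t → k-1-B ≤ d → acorrBit w' (d+1) = 1 → P' ∣ (k-1-d) := by
          intro d hdt hdB h1
          have hmem'' : (k-1-d) ∈ PerSet w' B :=
            ⟨by omega, by omega, (bit1' d (by omega)).mp h1⟩
          exact min_per_dvd h2B' hmem''
        clear_value P'
        -- pointwise bound
        have hpoint : ∀ d ∈ range t,
            -((if d < k-1-B then r^d else 0) +
              (if (k-1-B ≤ d ∧ P' ∣ (k-1-d)) then r^d else 0)) ≤ c d * r^d := by
          intro d hd
          simp only [Finset.mem_range] at hd
          have hrd : (0:ℝ) ≤ r^d := by positivity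
          rcases hbits w' (d+1) with h0 | h1
          · have hc0 : 0 ≤ c d := by
              simp only [hc, h0]
              rcases hbits w (d+1) with h | h <;> rw [h] <;> norm_num
            have : (0:ℝ) ≤ c d * r^d := mul_nonneg hc0 hrd
            have e1 : (0:ℝ) ≤ (if d < k-1-B then r^d else 0) := by positivity
            have e2 : (0:ℝ) ≤ (if (k-1-B ≤ d ∧ P' ∣ (k-1-d)) then r^d else 0) := by positivity
            linarith
          · have hc1 : -1 ≤ c d := by
              simp only [hc, h1]
              rcases hbits w (d+1) with h | h <;> rw [h] <;> norm_num
            have hcd : -r^d ≤ c d * r^d := by nlinarith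
            by_cases hdB : d < k-1-B
            · rw [if_pos hdB]
              have e2 : (0:ℝ) ≤ (if (k-1-B ≤ d ∧ P' ∣ (k-1-d)) then r^d else 0) := by positivity
              linarith
            · push_neg at hdB
              have hdvd : P' ∣ (k-1-d) := hP'dvd d hd hdB h1
              rw [if_neg (by omega), if_pos ⟨hdB, hdvd⟩]
              linarith
        have hsum1 : ∑ d ∈ range t, (if d < k-1-B then r^d else 0) ≤ (1/8) * r^t :=
          low_deg_sum hr (by omega)
        have hsum2 : ∑ d ∈ range t, (if (k-1-B ≤ d ∧ P' ∣ (k-1-d)) then r^d else 0)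
            ≤ (2/3) * r^t := by
          have hmono : ∀ d ∈ range t, (if (k-1-B ≤ d ∧ P' ∣ (k-1-d)) then r^d else 0)
              ≤ (if P' ∣ (k-1-d) then r^d else 0) := by
            intro d _
            split_ifs with ha hb hb
            · exact le_refl _
            · exact absurd ha.2 hb
            · positivity
            · exact le_refl _
          calc ∑ d ∈ range t, (if (k-1-B ≤ d ∧ P' ∣ (k-1-d)) then r^d else 0)
              ≤ ∑ d ∈ range t, (if P' ∣ (k-1-d) then r^d else 0) := Finset.sum_le_sum hmono
            _ ≤ (2/3) * r^t := struct_sum hr (by omega) (by omega) hP'2 (by omega)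
        have := Finset.sum_le_sum hpoint
        have hsplit2 : ∑ d ∈ range t,
            (-((if d < k-1-B then r^d else 0) +
              (if (k-1-B ≤ d ∧ P' ∣ (k-1-d)) then r^d else 0)))
            = -(∑ d ∈ range t, (if d < k-1-B then r^d else 0)
              + ∑ d ∈ range t, (if (k-1-B ≤ d ∧ P' ∣ (k-1-d)) then r^d else 0)) := by
          rw [← Finset.sum_add_distrib, ← Finset.sum_neg_distrib]
        rw [hsplit2] at this
        linarith
      · -- no structured periods for w' at all
        have hpoint : ∀ d ∈ range t,
            -(if d < k-1-B then r^d else 0) ≤ c d * r^d := by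
          intro d hd
          simp only [Finset.mem_range] at hd
          have hrd : (0:ℝ) ≤ r^d := by positivity
          rcases hbits w' (d+1) with h0 | h1
          · have hc0 : 0 ≤ c d := by
              simp only [hc, h0]
              rcases hbits w (d+1) with h | h <;> rw [h] <;> norm_num
            have : (0:ℝ) ≤ c d * r^d := mul_nonneg hc0 hrd
            have e1 : (0:ℝ) ≤ (if d < k-1-B then r^d else 0) := by positivity
            linarith
          · have hc1 : -1 ≤ c d := by
              simp only [hc, h1]
              rcases hbits w (d+1) with h | h <;> rw [h] <;> norm_num
            have hcd : -r^d ≤ c d * r^d := by nlinarith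
            by_cases hdB : d < k-1-B
            · rw [if_pos hdB]; linarith
            · exfalso
              push_neg at hdB
              have hmem'' : (k-1-d) ∈ PerSet w' B := by
                refine ⟨by omega, by omega, ?_⟩
                exact (bit1' d (by omega)).mp h1
              exact hSw' ⟨_, hmem''⟩
        have hsum1 : ∑ d ∈ range t, (if d < k-1-B then r^d else 0) ≤ (1/8) * r^t :=
          low_deg_sum hr (by omega)
        have := Finset.sum_le_sum hpoint
        have hsplit2 : ∑ d ∈ range t, (-(if d < k-1-B then r^d else 0))
            = -∑ d ∈ range t, (if d < k-1-B then r^d else 0) := by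
          rw [← Finset.sum_neg_distrib]
        rw [hsplit2] at this
        have e2 : (0:ℝ) ≤ (2/3) * r^t := by positivity
        linarith
    -- conclude
    have hDlb : (5/24) * r^t ≤ D := by
      rw [hsplit]; linarith
    have hDpos : (0:ℝ) < D := by
      have : (0:ℝ) < r^t := pow_pos hr0 t
      nlinarith
    calc r^t ≤ (24/5) * D := by nlinarith
      _ ≤ 12 * D * r^(k - B + 2) := by nlinarith

end KeyLemma

section MainEst

set_option maxHeartbeats 2000000 in
lemma main_est {r : ℝ} (hr : 2 ≤ r) {k t : ℕ} (hk : 100 ≤ k) (htk : t + 2 ≤ k)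
    {β β' : ℕ → ℝ}
    (hβ : ∀ d, 0 ≤ β d ∧ β d ≤ 1) (hβ' : ∀ d, 0 ≤ β' d ∧ β' d ≤ 1)
    (hβk : β (k-1) = 1) (hβ'k : β' (k-1) = 1)
    (hag : ∀ d, t < d → d < k → β d = β' d)
    {α α' : ℝ}
    (hα1 : α < r) (hα2 : (r - α) * r^(k-2) ≤ 1)
    (hα1' : α' < r) (hα2' : (r - α') * r^(k-2) ≤ 1)
    (hroot : (r - α) * (∑ d ∈ range k, β d * α^d) = 1)
    (hroot' : (r - α') * (∑ d ∈ range k, β' d * α'^d) = 1)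
    (hD1 : 1 ≤ (∑ d ∈ range k, β d * r^d) - (∑ d ∈ range k, β' d * r^d))
    {E Qpow : ℝ} (hE1 : 1 ≤ E) (hQpow : 0 < Qpow)
    (hKEY : r^t ≤ 12 * ((∑ d ∈ range k, β d * r^d) - (∑ d ∈ range k, β' d * r^d)) * E)
    (hQ : 57606 * (E * r) ≤ 250000 * (Qpow * r^(k-1))) :
    |((∑ d ∈ range k, β d * α^d) + (α - r) * (∑ d ∈ range k, β d * (d * α^(d-1)))) /
      ((∑ d ∈ range k, β' d * α'^d) + (α' - r) * (∑ d ∈ range k, β' d * (d * α'^(d-1))))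
      - 1 - ((∑ d ∈ range k, β d * r^d) - (∑ d ∈ range k, β' d * r^d)) /
          (∑ d ∈ range k, β' d * r^d)|
      ≤ 1000000 * k * Qpow * ((((∑ d ∈ range k, β d * r^d) - (∑ d ∈ range k, β' d * r^d))) /
          (∑ d ∈ range k, β' d * r^d)) := by
  have hr1 : (1:ℝ) ≤ r := by linarith
  have hr0 : (0:ℝ) < r := by linarith
  have hr32 : (3:ℝ)/2 ≤ r := by linarith
  have hk1 : (1:ℕ) ≤ k := by omega
  have hkR : (1:ℝ) ≤ k := by exact_mod_cast hk1
  set A1 := ∑ d ∈ range k, β d * α^d with hA1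
  set A2 := ∑ d ∈ range k, β' d * α'^d with hA2
  set A2a := ∑ d ∈ range k, β' d * α^d with hA2a
  set A1q := ∑ d ∈ range k, β d * r^d with hA1q
  set A2q := ∑ d ∈ range k, β' d * r^d with hA2q
  set B1 := ∑ d ∈ range k, β d * (d * α^(d-1)) with hB1
  set B2 := ∑ d ∈ range k, β' d * (d * α'^(d-1)) with hB2
  set B2a := ∑ d ∈ range k, β' d * (d * α^(d-1)) with hB2a
  set D := A1q - A2q with hDdef
  set R1 := r^(k-1) with hR1
  -- basic powers
  have hpow22 : ((2:ℝ))^(k-2) ≤ r^(k-2) := pow_le_pow_left₀ (by norm_num) hr _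
  have hbigN : (72 * k : ℝ) ≤ 2^(k-2) := by
    have h0 := nat_big hk
    have h2 : ((72 * k : ℕ) : ℝ) ≤ ((2^(k-2) : ℕ) : ℝ) := by exact_mod_cast h0
    push_cast at h2
    exact h2
  have hbig : (72:ℝ) * k ≤ r^(k-2) := le_trans hbigN hpow22
  have hrk2 : (2:ℝ) ≤ r^(k-2) := by
    have h1 : (2:ℝ) = 2^1 := by norm_num
    have h2 : (2:ℝ)^1 ≤ 2^(k-2) := pow_le_pow_right₀ (by norm_num) (by omega)
    linarith [hpow22]
  have hR1r : R1 = r^(k-2) * r := by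
    rw [hR1, ← pow_succ]; congr 1; omega
  have hbigR1 : (72:ℝ) * k * r ≤ R1 := by
    rw [hR1r]
    exact mul_le_mul_of_nonneg_right hbig (by linarith)
  have hbigR1' : (72:ℝ) * k ≤ R1 := by
    have h1 : (72:ℝ)*k*1 ≤ 72*k*r := by
      apply mul_le_mul_of_nonneg_left hr1 (by positivity)
    linarith
  have hR1pos : (0:ℝ) < R1 := by rw [hR1]; positivity
  -- alpha bounds
  have hσpos : 0 < r - α := by linarith
  have hσpos' : 0 < r - α' := by linarith
  have hαhalf : r - α ≤ 1/2 := by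
    have h1 : (r-α)*2 ≤ (r-α)*r^(k-2) := mul_le_mul_of_nonneg_left hrk2 (le_of_lt hσpos)
    linarith
  have hαhalf' : r - α' ≤ 1/2 := by
    have h1 : (r-α')*2 ≤ (r-α')*r^(k-2) := mul_le_mul_of_nonneg_left hrk2 (le_of_lt hσpos')
    linarith
  have hα32 : (3:ℝ)/2 ≤ α := by linarith
  have hα32' : (3:ℝ)/2 ≤ α' := by linarith
  have hα0 : (0:ℝ) ≤ α := by linarith
  have hα0' : (0:ℝ) ≤ α' := by linarith
  have hαr : α ≤ r := le_of_lt hα1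
  have hαr' : α' ≤ r := le_of_lt hα1'
  have hσR1 : (r - α) * R1 ≤ r := by
    have h := mul_le_mul_of_nonneg_right hα2 (le_of_lt hr0)
    calc (r - α) * R1 = ((r-α) * r^(k-2)) * r := by rw [hR1r]; ring
      _ ≤ 1 * r := h
      _ = r := one_mul r
  have hσR1' : (r - α') * R1 ≤ r := by
    have h := mul_le_mul_of_nonneg_right hα2' (le_of_lt hr0)
    calc (r - α') * R1 = ((r-α') * r^(k-2)) * r := by rw [hR1r]; ring
      _ ≤ 1 * r := h
      _ = r := one_mul r
  -- A bounds
  have hA1lb0 : α^(k-1) ≤ A1 := sum_lb (fun d => (hβ d).1) hβk hα0 hk1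
  have hA2lb0 : α'^(k-1) ≤ A2 := sum_lb (fun d => (hβ' d).1) hβ'k hα0' hk1
  have hpowd : r^(k-1) - α^(k-1) ≤ (k-1:ℕ) * r^((k-1)-1) * (r - α) := pow_diff hα0 hαr le_rfl (k-1)
  have hpowd' : r^(k-1) - α'^(k-1) ≤ (k-1:ℕ) * r^((k-1)-1) * (r - α') := pow_diff hα0' hαr' le_rfl (k-1)
  have hexp21 : (k-1) - 1 = k - 2 := by omega
  rw [hexp21] at hpowd hpowd'
  have hkm1 : ((k-1:ℕ):ℝ) ≤ (k:ℝ) := by exact_mod_cast Nat.sub_le k 1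
  have hkm0 : (0:ℝ) ≤ ((k-1:ℕ):ℝ) := by positivity
  have hαpow : R1 - α^(k-1) ≤ k := by
    have t1 : ((k-1:ℕ):ℝ) * ((r-α) * r^(k-2)) ≤ ((k-1:ℕ):ℝ) * 1 :=
      mul_le_mul_of_nonneg_left hα2 hkm0
    have t2 : ((k-1:ℕ):ℝ) * r^(k-2) * (r - α) = ((k-1:ℕ):ℝ) * ((r-α) * r^(k-2)) := by ring
    rw [hR1]; linarith [hpowd]
  have hαpow' : R1 - α'^(k-1) ≤ k := by
    have t1 : ((k-1:ℕ):ℝ) * ((r-α') * r^(k-2)) ≤ ((k-1:ℕ):ℝ) * 1 :=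
      mul_le_mul_of_nonneg_left hα2' hkm0
    have t2 : ((k-1:ℕ):ℝ) * r^(k-2) * (r - α') = ((k-1:ℕ):ℝ) * ((r-α') * r^(k-2)) := by ring
    rw [hR1]; linarith [hpowd']
  have hA1lb : R1/2 ≤ A1 := by linarith [hbigR1']
  have hA2lb : R1/2 ≤ A2 := by linarith [hbigR1']
  have hA1pos : 0 < A1 := by linarith
  have hA2pos : 0 < A2 := by linarith
  have hαk1 : α^(k-1) ≤ R1 := by rw [hR1]; exact pow_le_pow_left₀ hα0 hαr _
  have hαk1' : α'^(k-1) ≤ R1 := by rw [hR1]; exact pow_le_pow_left₀ hα0' hαr' _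
  have hA1ub : A1 ≤ 3*R1 := le_trans (sum_ub hβ hα32 hk1) (by linarith)
  have hA2ub : A2 ≤ 3*R1 := le_trans (sum_ub hβ' hα32' hk1) (by linarith)
  have hA2aub : A2a ≤ 3*R1 := le_trans (sum_ub hβ' hα32 hk1) (by linarith)
  have hA2ann : 0 ≤ A2a := sum_nonneg' (fun d => (hβ' d).1) hα0
  have hA1qlb : R1 ≤ A1q := by
    have h := sum_lb (fun d => (hβ d).1) hβk (by linarith : (0:ℝ) ≤ r) hk1
    rw [hR1]; exact h
  have hA2qlb : R1 ≤ A2q := by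
    have h := sum_lb (fun d => (hβ' d).1) hβ'k (by linarith : (0:ℝ) ≤ r) hk1
    rw [hR1]; exact h
  have hA1qub : A1q ≤ 3*R1 := by
    have h := sum_ub hβ hr32 hk1
    rw [hR1]; linarith
  have hA2qub : A2q ≤ 3*R1 := by
    have h := sum_ub hβ' hr32 hk1
    rw [hR1]; linarith
  have hA2qpos : 0 < A2q := by linarith
  -- B bounds
  have hB1nn : 0 ≤ B1 := sumT_nonneg (fun d => (hβ d).1) hα0
  have hB2nn : 0 ≤ B2 := sumT_nonneg (fun d => (hβ' d).1) hα0'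
  have hB2ann : 0 ≤ B2a := sumT_nonneg (fun d => (hβ' d).1) hα0
  have hk3nn : (0:ℝ) ≤ 3*(k:ℝ) := by positivity
  have hB1ub : B1 ≤ 3*k*R1 := by
    have h1 := sumT_ub hβ hα32 hk1
    have h2 : 3*(k:ℝ)*α^(k-1) ≤ 3*(k:ℝ)*R1 := by
      have := mul_le_mul_of_nonneg_left hαk1 hk3nn
      linarith
    linarith
  have hB2ub : B2 ≤ 3*k*R1 := by
    have h1 := sumT_ub hβ' hα32' hk1
    have h2 : 3*(k:ℝ)*α'^(k-1) ≤ 3*(k:ℝ)*R1 := by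
      have := mul_le_mul_of_nonneg_left hαk1' hk3nn
      linarith
    linarith
  have hB2aub : B2a ≤ 3*k*R1 := by
    have h1 := sumT_ub hβ' hα32 hk1
    have h2 : 3*(k:ℝ)*α^(k-1) ≤ 3*(k:ℝ)*R1 := by
      have := mul_le_mul_of_nonneg_left hαk1 hk3nn
      linarith
    linarith
  -- P bounds
  set P1 := A1 + (α - r) * B1 with hP1
  set P2 := A2 + (α' - r) * B2 with hP2
  have hσB1 : (r - α) * B1 ≤ 3*k*r := by
    have h1 : (r-α) * B1 ≤ (r-α) * (3*k*R1) := mul_le_mul_of_nonneg_left hB1ub (le_of_lt hσpos)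
    have h3 : 3*(k:ℝ)*((r-α)*R1) ≤ 3*(k:ℝ)*r := mul_le_mul_of_nonneg_left hσR1 hk3nn
    have h2 : (r-α) * (3*(k:ℝ)*R1) = 3*(k:ℝ)*((r-α)*R1) := by ring
    linarith
  have hσB2 : (r - α') * B2 ≤ 3*k*r := by
    have h1 : (r-α') * B2 ≤ (r-α') * (3*k*R1) := mul_le_mul_of_nonneg_left hB2ub (le_of_lt hσpos')
    have h3 : 3*(k:ℝ)*((r-α')*R1) ≤ 3*(k:ℝ)*r := mul_le_mul_of_nonneg_left hσR1' hk3nn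
    have h2 : (r-α') * (3*(k:ℝ)*R1) = 3*(k:ℝ)*((r-α')*R1) := by ring
    linarith
  have hP1lb : R1/4 ≤ P1 := by
    rw [hP1]
    have he : A1 + (α - r)*B1 = A1 - (r - α)*B1 := by ring
    rw [he]
    linarith [hbigR1]
  have hP2lb : R1/4 ≤ P2 := by
    rw [hP2]
    have he : A2 + (α' - r)*B2 = A2 - (r - α')*B2 := by ring
    rw [he]
    linarith [hbigR1]
  have hP1pos : 0 < P1 := by linarith
  have hP2pos : 0 < P2 := by linarith
  have hP2ub : P2 ≤ 3*R1 := by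
    rw [hP2]
    have h1 : 0 ≤ (r - α') * B2 := mul_nonneg (le_of_lt hσpos') hB2nn
    have h2 : A2 + (α' - r)*B2 = A2 - (r - α')*B2 := by ring
    linarith
  -- delta
  have hdel : (α' - α) * (A1 * A2) = A2 - A1 := by
    linear_combination A2 * hroot - A1 * hroot'
  have hA1A2lb : R1^2/4 ≤ A1 * A2 := by
    have h := mul_le_mul hA1lb hA2lb (by linarith) (by linarith)
    linarith [h]
  have hA1A2ub : A1 * A2 ≤ 9*R1^2 := by
    have h := mul_le_mul hA1ub hA2ub (by linarith) (by linarith)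
    linarith [h]
  -- difference polynomial
  set g : ℕ → ℝ := fun d => β d - β' d with hg
  have hgabs : ∀ d, |g d| ≤ 1 := by
    intro d
    rw [hg, abs_le]
    refine ⟨?_, ?_⟩
    · simp only
      linarith [(hβ d).1, (hβ' d).2]
    · simp only
      linarith [(hβ d).2, (hβ' d).1]
  have hgz : ∀ d, t < d → d < k → g d = 0 := by
    intro d h1 h2; rw [hg]; simp only; rw [hag d h1 h2]; ring
  have ht1k : t + 1 ≤ k := by omega
  have htkR : ((t+1:ℕ):ℝ) ≤ (k:ℝ) := by exact_mod_cast ht1k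
  have ht10 : (1:ℕ) ≤ t + 1 := by omega
  have hexp_t : (t+1) - 1 = t := by omega
  have hshrinkα : A1 - A2a = ∑ d ∈ range (t+1), g d * α^d := by
    rw [hA1, hA2a, ← Finset.sum_sub_distrib]
    rw [← support_shrink hgz ht1k (fun d => α^d)]
    apply Finset.sum_congr rfl
    intro d _
    rw [hg]; ring
  have hshrinkr : D = ∑ d ∈ range (t+1), g d * r^d := by
    rw [hDdef, hA1q, hA2q, ← Finset.sum_sub_distrib]
    rw [← support_shrink hgz ht1k (fun d => r^d)]
    apply Finset.sum_congr rfl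
    intro d _
    rw [hg]; ring
  have hshrinkT : B1 - B2a = ∑ d ∈ range (t+1), g d * (d * α^(d-1)) := by
    rw [hB1, hB2a, ← Finset.sum_sub_distrib,
      ← support_shrink hgz ht1k (fun d => (d:ℝ) * α^(d-1))]
    apply Finset.sum_congr rfl
    intro d _
    rw [hg]; ring
  have hrt_pos : (0:ℝ) < r^t := pow_pos hr0 t
  have hαt : α^t ≤ r^t := pow_le_pow_left₀ hα0 hαr t
  have hαtnn : (0:ℝ) ≤ α^t := by positivity
  -- |A1 - A2a| ≤ 3 r^t
  have hDα : |A1 - A2a| ≤ 3 * r^t := by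
    rw [hshrinkα]
    have h1 := sum_abs_ub hgabs hα32 ht10
    rw [hexp_t] at h1
    linarith
  -- |(A1 - A2a) - D| ≤ 3 k r^t (r - α)
  have hDqd : |(A1 - A2a) - D| ≤ 3 * k * r^t * (r - α) := by
    have he : (A1 - A2a) - D
        = (∑ d ∈ range (t+1), g d * α^d) - (∑ d ∈ range (t+1), g d * r^d) := by
      rw [hshrinkα, hshrinkr]
    rw [he]
    have h1 := sum_diff hgabs hα0 hαr (by linarith : (0:ℝ) ≤ r) le_rfl hr32 ht10
    rw [hexp_t] at h1
    have h2 : |α - r| = r - α := by rw [abs_of_nonpos (by linarith)]; ring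
    rw [h2] at h1
    have h3 : 3 * 1 * ((t+1:ℕ):ℝ) * r^t * (r - α) ≤ 3 * k * r^t * (r - α) := by
      have h4 : ((t+1:ℕ):ℝ) * (r^t * (r-α)) ≤ (k:ℝ) * (r^t * (r-α)) :=
        mul_le_mul_of_nonneg_right htkR (by positivity)
      linarith [h4]
    linarith
  -- |A2a - A2| ≤ 3 k R1 |α - α'|
  have hA2ad : |A2a - A2| ≤ 3 * k * R1 * |α - α'| := by
    have h1 := sum_diff (f := β') (F := 1) (n := k) (x := α) (y := α') (M := r)
      (fun d => by rw [abs_of_nonneg (hβ' d).1]; exact (hβ' d).2)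
      hα0 hαr hα0' hαr' hr32 hk1
    rw [hR1]
    calc |A2a - A2| ≤ 3 * 1 * k * r^(k-1) * |α - α'| := h1
      _ = 3 * k * r^(k-1) * |α - α'| := by ring
  set dba := |α - α'| with hdba_def
  have hdba0 : 0 ≤ dba := abs_nonneg _
  have hdba : dba * R1^2 ≤ 24 * r^t := by
    have h1 : dba * (A1 * A2) = |A2 - A1| := by
      rw [hdba_def, ← abs_of_pos (by positivity : (0:ℝ) < A1 * A2), ← abs_mul]
      rw [show (α - α') * (A1 * A2) = -((α' - α) * (A1 * A2)) by ring, hdel, abs_neg]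
    have h2 : |A2 - A1| ≤ 3*k*R1*dba + 3*r^t := by
      have e1 : |A2 - A1| ≤ |A2 - A2a| + |A2a - A1| := abs_sub_le A2 A2a A1
      have e2 : |A2 - A2a| = |A2a - A2| := abs_sub_comm _ _
      have e3 : |A2a - A1| = |A1 - A2a| := abs_sub_comm _ _
      rw [e2, e3] at e1
      linarith [hA2ad, hDα]
    have h3 : dba * (R1^2/4) ≤ dba * (A1 * A2) := mul_le_mul_of_nonneg_left hA1A2lb hdba0
    have h3' : dba * (R1^2/4) ≤ |A2 - A1| := by rw [← h1]; exact h3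
    have h4 : dba * (R1^2/4) - 3*k*R1*dba ≤ 3*r^t := by linarith
    have h5 : 72*(k:ℝ)*(dba*R1) ≤ R1*(dba*R1) :=
      mul_le_mul_of_nonneg_right hbigR1' (mul_nonneg hdba0 (le_of_lt hR1pos))
    linarith [h5]
  have hA2adR1 : |A2a - A2| * R1 ≤ 72 * k * r^t := by
    have h1 : |A2a - A2| * R1 ≤ (3*k*R1*dba) * R1 :=
      mul_le_mul_of_nonneg_right hA2ad (le_of_lt hR1pos)
    have h3 : 3*(k:ℝ)*(dba*R1^2) ≤ 3*(k:ℝ)*(24*r^t) := mul_le_mul_of_nonneg_left hdba hk3nn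
    have h2 : (3*(k:ℝ)*R1*dba) * R1 = 3*(k:ℝ)*(dba*R1^2) := by ring
    linarith
  -- PieceI
  set PieceI := (A1 - A2) - D with hPieceI
  have hPI : |PieceI| * R1 ≤ 39 * k * r^(t+1) := by
    have he : PieceI = ((A1 - A2a) - D) + (A2a - A2) := by rw [hPieceI]; ring
    have h1 : |PieceI| ≤ |(A1 - A2a) - D| + |A2a - A2| := by
      rw [he]; exact abs_add_le _ _
    have h2 : |PieceI| * R1 ≤ (|(A1 - A2a) - D| + |A2a - A2|) * R1 :=
      mul_le_mul_of_nonneg_right h1 (le_of_lt hR1pos)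
    have h3 : |(A1 - A2a) - D| * R1 ≤ (3*k*r^t*(r-α)) * R1 :=
      mul_le_mul_of_nonneg_right hDqd (le_of_lt hR1pos)
    have h4 : 3*(k:ℝ)*r^t*((r-α)*R1) ≤ 3*(k:ℝ)*r^t*r :=
      mul_le_mul_of_nonneg_left hσR1 (by positivity)
    have h5 : r^t * r = r^(t+1) := by rw [← pow_succ]
    have h6 : 36*(k:ℝ)*r^t*2 ≤ 36*(k:ℝ)*r^t*r :=
      mul_le_mul_of_nonneg_left hr (by positivity)
    have h7 : (3*(k:ℝ)*r^t*(r-α)) * R1 = 3*(k:ℝ)*r^t*((r-α)*R1) := by ring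
    have h8 : 3*(k:ℝ)*r^t*r = 3*(k:ℝ)*r^(t+1) := by rw [← h5]; ring
    have h9 : 36*(k:ℝ)*r^t*r = 36*(k:ℝ)*r^(t+1) := by rw [← h5]; ring
    linarith
  -- B differences
  have hB1B2a : |B1 - B2a| ≤ 3 * k * r^t := by
    rw [hshrinkT]
    have h1 := sumT_abs_ub hgabs hα32 ht10
    rw [hexp_t] at h1
    have h2 : ((t+1:ℕ):ℝ) * α^t ≤ (k:ℝ) * r^t :=
      mul_le_mul htkR hαt hαtnn (by positivity)
    linarith
  have hB2ad : |B2a - B2| ≤ 3 * k^2 * R1 * dba := by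
    have h1 := sumT_diff (f := β') (F := 1) (n := k) (x := α) (y := α') (M := r)
      (fun d => by rw [abs_of_nonneg (hβ' d).1]; exact (hβ' d).2)
      hα0 hαr hα0' hαr' hr32 hk1
    rw [hR1]
    calc |B2a - B2| ≤ 3 * 1 * (k:ℝ)^2 * r^(k-1) * dba := h1
      _ = 3 * k^2 * r^(k-1) * dba := by ring
  have hB2adR1 : |B2a - B2| * R1 ≤ 72 * k^2 * r^t := by
    have h1 : |B2a - B2| * R1 ≤ (3*k^2*R1*dba) * R1 :=
      mul_le_mul_of_nonneg_right hB2ad (le_of_lt hR1pos)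
    have h3 : 3*(k:ℝ)^2*(dba*R1^2) ≤ 3*(k:ℝ)^2*(24*r^t) :=
      mul_le_mul_of_nonneg_left hdba (by positivity)
    have h2 : (3*(k:ℝ)^2*R1*dba) * R1 = 3*(k:ℝ)^2*(dba*R1^2) := by ring
    linarith
  have hB1B2 : |B1 - B2| ≤ 6 * k * r^t := by
    have h1 : |B1 - B2| ≤ |B1 - B2a| + |B2a - B2| := abs_sub_le B1 B2a B2
    have h2 : |B1 - B2| * R1 ≤ (|B1 - B2a| + |B2a - B2|) * R1 :=
      mul_le_mul_of_nonneg_right h1 (le_of_lt hR1pos)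
    have h3 : |B1 - B2a| * R1 ≤ (3*k*r^t)*R1 :=
      mul_le_mul_of_nonneg_right hB1B2a (le_of_lt hR1pos)
    have h4 : ((k:ℝ)*r^t)*(72*k) ≤ ((k:ℝ)*r^t)*R1 :=
      mul_le_mul_of_nonneg_left hbigR1' (by positivity)
    have h2' : (|B1 - B2a| + |B2a - B2|) * R1 = |B1 - B2a| * R1 + |B2a - B2| * R1 := by ring
    have h4' : ↑k * r ^ t * (72 * ↑k) = 72 * (k:ℝ)^2 * r^t := by ring
    have hpos1 : (0:ℝ) ≤ (k:ℝ)*r^t*R1 := by positivity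
    have h5 : |B1 - B2| * R1 ≤ (6*k*r^t)*R1 := by linarith
    exact le_of_mul_le_mul_right h5 hR1pos
  have hA1A2d : |A1 - A2| ≤ 6 * r^t := by
    have h1 : |A1 - A2| ≤ |A1 - A2a| + |A2a - A2| := abs_sub_le A1 A2a A2
    have h2 : |A1 - A2| * R1 ≤ (|A1 - A2a| + |A2a - A2|) * R1 :=
      mul_le_mul_of_nonneg_right h1 (le_of_lt hR1pos)
    have h3 : |A1 - A2a| * R1 ≤ (3*r^t)*R1 :=
      mul_le_mul_of_nonneg_right hDα (le_of_lt hR1pos)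
    have h4 : (r^t)*(72*k) ≤ (r^t)*R1 :=
      mul_le_mul_of_nonneg_left hbigR1' (by positivity)
    have h2' : (|A1 - A2a| + |A2a - A2|) * R1 = |A1 - A2a| * R1 + |A2a - A2| * R1 := by ring
    have h4' : (r^t)*(72*(k:ℝ)) = 72*(k:ℝ)*r^t := by ring
    have hpos1 : (0:ℝ) ≤ (k:ℝ)*r^t*R1 := by positivity
    have hpos2 : (0:ℝ) ≤ r^t*R1 := by positivity
    have h5 : |A1 - A2| * R1 ≤ (6*r^t)*R1 := by linarith
    exact le_of_mul_le_mul_right h5 hR1pos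
  -- e1, e2
  set e1 := P1 - A1q with he1
  set e2 := P2 - A2q with he2
  have hIdent : (e1 - e2) * (A1*A2) = PieceI * (A1*A2) - (B1*A2 - B2*A1) := by
    rw [he1, he2, hP1, hP2, hPieceI, hDdef]
    linear_combination (-(B1*A2)) * hroot + (B2*A1) * hroot'
  have hB1A2 : |B1*A2 - B2*A1| ≤ 36 * k * r^t * R1 := by
    have he : B1*A2 - B2*A1 = (B1 - B2)*A2 + B2*(A2 - A1) := by ring
    rw [he]
    have h0 : |(B1 - B2)*A2 + B2*(A2 - A1)| ≤ |(B1 - B2)*A2| + |B2*(A2 - A1)| := abs_add_le _ _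
    have e1' : |(B1 - B2)*A2| = |B1 - B2| *A2 := by
      rw [abs_mul, abs_of_nonneg (le_of_lt hA2pos)]
    have e2' : |B2*(A2 - A1)| = B2*|A2 - A1| := by
      rw [abs_mul, abs_of_nonneg hB2nn]
    have h1 : |B1 - B2| *A2 ≤ (6*k*r^t)*(3*R1) :=
      mul_le_mul hB1B2 hA2ub (le_of_lt hA2pos) (by positivity)
    have h2 : B2*|A2 - A1| ≤ (3*k*R1)*(6*r^t) := by
      rw [abs_sub_comm]
      exact mul_le_mul hB2ub hA1A2d (abs_nonneg _) (by positivity)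
    have h3 : (6*(k:ℝ)*r^t)*(3*R1) = 18*k*r^t*R1 := by ring
    have h4 : (3*(k:ℝ)*R1)*(6*r^t) = 18*k*r^t*R1 := by ring
    linarith
  have he1e2A : |e1 - e2| * (A1*A2) ≤ 400 * k * r^(t+1) * R1 := by
    have h1 : |e1 - e2| * (A1*A2) = |(e1 - e2) * (A1*A2)| := by
      rw [abs_mul, abs_of_pos (by positivity : (0:ℝ) < A1*A2)]
    rw [h1, hIdent]
    have h2 : |PieceI * (A1*A2) - (B1*A2 - B2*A1)|
        ≤ |PieceI * (A1*A2)| + |B1*A2 - B2*A1| := abs_sub _ _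
    have h2' : |PieceI * (A1*A2)| = |PieceI| *(A1*A2) := by
      rw [abs_mul, abs_of_pos (by positivity : (0:ℝ) < A1*A2)]
    have h3 : |PieceI| *(A1*A2) ≤ |PieceI| *(9*R1^2) :=
      mul_le_mul_of_nonneg_left hA1A2ub (abs_nonneg _)
    have h4 : |PieceI| *(9*R1^2) = 9*R1*(|PieceI| *R1) := by ring
    have h5 : 9*R1*(|PieceI| *R1) ≤ 9*R1*(39*k*r^(t+1)) :=
      mul_le_mul_of_nonneg_left hPI (by positivity)
    have h6 : r^t ≤ r^(t+1) := pow_le_pow_right₀ hr1 (by omega)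
    have h7 : (36*(k:ℝ)*R1)*r^t ≤ (36*(k:ℝ)*R1)*r^(t+1) :=
      mul_le_mul_of_nonneg_left h6 (by positivity)
    have h8 : 9*R1*(39*(k:ℝ)*r^(t+1)) = 351*k*r^(t+1)*R1 := by ring
    have h9 : (36*(k:ℝ)*R1)*r^t = 36*k*r^t*R1 := by ring
    have h10 : (36*(k:ℝ)*R1)*r^(t+1) = 36*k*r^(t+1)*R1 := by ring
    have hpos1 : (0:ℝ) ≤ (k:ℝ)*r^(t+1)*R1 := by positivity
    linarith
  have he1e2 : |e1 - e2| * R1 ≤ 1600 * k * r^(t+1) := by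
    have h1 : |e1 - e2| * (R1^2/4) ≤ |e1 - e2| * (A1*A2) :=
      mul_le_mul_of_nonneg_left hA1A2lb (abs_nonneg _)
    have h2 : (|e1 - e2| * R1) * R1 ≤ (1600 * k * r^(t+1)) * R1 := by linarith
    exact le_of_mul_le_mul_right h2 hR1pos
  -- e2 bound
  have he2b : |e2| ≤ 6 * k * r := by
    have he2e : e2 = (A2 - A2q) - (r - α') * B2 := by rw [he2, hP2]; ring
    have h1 : |A2 - A2q| ≤ 3*k*R1*(r - α') := by
      have hd := sum_diff (f := β') (F := 1) (n := k) (x := α') (y := r) (M := r)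
        (fun d => by rw [abs_of_nonneg (hβ' d).1]; exact (hβ' d).2)
        hα0' hαr' (by linarith : (0:ℝ) ≤ r) le_rfl hr32 hk1
      have h2 : |α' - r| = r - α' := by rw [abs_of_nonpos (by linarith)]; ring
      rw [h2] at hd
      rw [hR1]
      calc |A2 - A2q| ≤ 3 * 1 * k * r^(k-1) * (r - α') := hd
        _ = 3*k*r^(k-1)*(r - α') := by ring
    have h1' : 3*(k:ℝ)*R1*(r - α') ≤ 3*k*r := by
      have h3 : 3*(k:ℝ)*((r-α')*R1) ≤ 3*(k:ℝ)*r := mul_le_mul_of_nonneg_left hσR1' hk3nn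
      have h4 : 3*(k:ℝ)*R1*(r-α') = 3*(k:ℝ)*((r-α')*R1) := by ring
      linarith
    have h2 : |(r - α') * B2| ≤ 3*k*r := by
      rw [abs_of_nonneg (mul_nonneg (le_of_lt hσpos') hB2nn)]
      exact hσB2
    have h5 : |(A2 - A2q) - (r - α')*B2| ≤ |A2 - A2q| + |(r - α')*B2| := abs_sub _ _
    calc |e2| = |(A2 - A2q) - (r - α')*B2| := by rw [he2e]
      _ ≤ 6*k*r := by linarith
  -- numerator
  have hnum_ident : P1*A2q - P2*A1q = (e1 - e2)*A2q - e2*D := by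
    rw [he1, he2, hDdef]; ring
  have hDpos : (0:ℝ) < D := by rw [hDdef]; linarith
  have hnum : |P1*A2q - P2*A1q| ≤ 250000 * k * Qpow * D * R1 := by
    rw [hnum_ident]
    have h1 : |(e1 - e2)*A2q - e2*D| ≤ |e1 - e2| *A2q + |e2| *D := by
      have ha : |(e1 - e2)*A2q - e2*D| ≤ |(e1 - e2)*A2q| + |e2*D| := abs_sub _ _
      have hb : |(e1 - e2)*A2q| = |e1 - e2| *A2q := by
        rw [abs_mul, abs_of_pos hA2qpos]
      have hc : |e2*D| = |e2| *D := by
        rw [abs_mul, abs_of_pos hDpos]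
      linarith
    have h2 : |e1 - e2| *A2q ≤ |e1 - e2| *(3*R1) :=
      mul_le_mul_of_nonneg_left hA2qub (abs_nonneg _)
    have h4 : |e1 - e2| *A2q ≤ 4800*k*r^(t+1) := by linarith
    have h5 : r^(t+1) = r^t * r := by rw [← pow_succ]
    have h6 : r^(t+1) ≤ 12*D*E*r := by
      rw [h5]
      have := mul_le_mul_of_nonneg_right hKEY (le_of_lt hr0)
      linarith
    have h7 : (4800*(k:ℝ))*r^(t+1) ≤ (4800*(k:ℝ))*(12*D*E*r) :=
      mul_le_mul_of_nonneg_left h6 (by positivity)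
    have hEr : r ≤ E*r := le_mul_of_one_le_left (by linarith) hE1
    have hkD : (0:ℝ) ≤ (k:ℝ)*D := by positivity
    have h9 : (6*(k:ℝ)*D)*r ≤ (6*(k:ℝ)*D)*(E*r) :=
      mul_le_mul_of_nonneg_left hEr (by positivity)
    have h8 : |e2| *D ≤ (6*k*r)*D :=
      mul_le_mul_of_nonneg_right he2b (le_of_lt hDpos)
    have h10 := mul_le_mul_of_nonneg_left hQ hkD
    -- h10 : k*D*(57606*(E*r)) ≤ k*D*(250000*(Qpow*R1))
    have e7 : (4800*(k:ℝ))*(12*D*E*r) = 57600*(k*D*(E*r)) := by ring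
    have e9 : (6*(k:ℝ)*D)*(E*r) = 6*(k*D*(E*r)) := by ring
    have e8 : (6*(k:ℝ)*r)*D = (6*(k:ℝ)*D)*r := by ring
    have e10a : (k:ℝ)*D*(57606*(E*r)) = 57606*(k*D*(E*r)) := by ring
    have e10b : (k:ℝ)*D*(250000*(Qpow*R1)) = 250000*k*Qpow*D*R1 := by ring
    linarith
  -- final assembly
  have hQnn : (0:ℝ) ≤ Qpow := le_of_lt hQpow
  have hgoal_eq : P1/P2 - 1 - D/A2q = (P1*A2q - P2*A1q)/(P2*A2q) := by
    rw [hDdef]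
    field_simp
    ring
  have hRfold : 1000000 * (k:ℝ) * Qpow * (D / A2q)
      = (1000000 * k * Qpow * D) / A2q := by ring
  rw [hgoal_eq, hRfold]
  rw [abs_div, abs_of_pos (by positivity : (0:ℝ) < P2*A2q)]
  rw [div_le_div_iff₀ (by positivity) hA2qpos]
  have hR1P2 : R1 ≤ 4*P2 := by linarith
  have hfin : |P1*A2q - P2*A1q| ≤ 1000000*k*Qpow*D*P2 := by
    have h1 : (250000*(k:ℝ)*Qpow*D)*R1 ≤ (250000*(k:ℝ)*Qpow*D)*(4*P2) :=
      mul_le_mul_of_nonneg_left hR1P2 (by positivity)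
    have e1' : (250000*(k:ℝ)*Qpow*D)*R1 = 250000*k*Qpow*D*R1 := by ring
    have e2' : (250000*(k:ℝ)*Qpow*D)*(4*P2) = 1000000*k*Qpow*D*P2 := by ring
    linarith
  calc |P1*A2q - P2*A1q| * A2q ≤ (1000000*k*Qpow*D*P2) * A2q :=
        mul_le_mul_of_nonneg_right hfin (le_of_lt hA2qpos)
    _ = 1000000*k*Qpow*D*(P2*A2q) := by ring


end MainEst

section Eval

lemma APolyR_eval {σ : Type*} [DecidableEq σ] (w : List σ) (x : ℝ) :
    (APolyR w).eval x = ∑ d ∈ range w.length, (acorrBit w (d+1) : ℝ) * x^d := by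
  unfold APolyR
  rw [Polynomial.eval_finset_sum]
  apply Finset.sum_congr rfl
  intro d _
  rw [Polynomial.eval_mul, Polynomial.eval_C, Polynomial.eval_pow, Polynomial.eval_X]

lemma APolyR_deriv_eval {σ : Type*} [DecidableEq σ] (w : List σ) (x : ℝ) :
    (Polynomial.derivative (APolyR w)).eval x
      = ∑ d ∈ range w.length, (acorrBit w (d+1) : ℝ) * (d * x^(d-1)) := by
  unfold APolyR
  rw [map_sum, Polynomial.eval_finset_sum]
  apply Finset.sum_congr rfl
  intro d _
  rw [Polynomial.derivative_C_mul, Polynomial.derivative_X_pow]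
  rw [Polynomial.eval_mul, Polynomial.eval_C, Polynomial.eval_mul, Polynomial.eval_C,
    Polynomial.eval_pow, Polynomial.eval_X]

lemma PPolyR_eval {σ : Type*} [DecidableEq σ] (q : ℕ) (w : List σ) (x : ℝ) :
    (PPolyR q w).eval x
      = 1 + (x - q) * ∑ d ∈ range w.length, (acorrBit w (d+1) : ℝ) * x^d := by
  unfold PPolyR
  rw [Polynomial.eval_add, Polynomial.eval_one, Polynomial.eval_mul, Polynomial.eval_sub,
    Polynomial.eval_X, Polynomial.eval_C, APolyR_eval]

lemma PPolyR_deriv_eval {σ : Type*} [DecidableEq σ] (q : ℕ) (w : List σ) (x : ℝ) :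
    (Polynomial.derivative (PPolyR q w)).eval x
      = (∑ d ∈ range w.length, (acorrBit w (d+1) : ℝ) * x^d)
        + (x - q) * ∑ d ∈ range w.length, (acorrBit w (d+1) : ℝ) * (d * x^(d-1)) := by
  unfold PPolyR
  rw [Polynomial.derivative_add, Polynomial.derivative_one, Polynomial.derivative_mul,
    Polynomial.derivative_sub, Polynomial.derivative_X, Polynomial.derivative_C]
  simp only [zero_add, sub_zero, one_mul]
  rw [Polynomial.eval_add, Polynomial.eval_mul, Polynomial.eval_sub, Polynomial.eval_X,
    Polynomial.eval_C, APolyR_eval, APolyR_deriv_eval]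

end Eval

lemma one_div_div_one_div (a b : ℝ) : (1/a)/(1/b) = b/a := by
  rw [one_div, one_div, div_eq_mul_inv, inv_inv, div_eq_mul_inv, mul_comm]

end S14

open S14 Finset
set_option maxHeartbeats 2000000

/-- There are `C > 0` and `k₀` (independent of `q`) such that for all
`q ≥ 2` and words `w, w'` of common length `k ≥ k₀` with the autocorrelation of `w`
larger than that of `w'`, the coefficients `c_w` and `c_{w'}` satisfy
`|c_{w'}/c_w − 1 − Δ/A_{w'}(q)| ≤ C·k·q^(−k/3+4)·Δ/A_{w'}(q)` where `Δ = A_w(q) − A_{w'}(q)`. -/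
theorem stmt14 :
    ∃ C : ℝ, 0 < C ∧ ∃ k₀ : ℕ, ∀ (q k : ℕ), 2 ≤ q → k₀ ≤ k →
      ∀ w w' : List (Fin q), w.length = k → w'.length = k →
        (APolyR w').eval 2 < (APolyR w).eval 2 →
        ∀ αm αm' : ℝ,
          αm ∈ Set.Ioo ((q : ℝ) - (q : ℝ) ^ (-((k : ℤ) - 2))) (q : ℝ) →
          (PPolyR q w).IsRoot αm →
          αm' ∈ Set.Ioo ((q : ℝ) - (q : ℝ) ^ (-((k : ℤ) - 2))) (q : ℝ) →
          (PPolyR q w').IsRoot αm' →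
          |cwCoef q w' αm' / cwCoef q w αm - 1 -
              ((APolyR w).eval (q : ℝ) - (APolyR w').eval (q : ℝ)) /
                (APolyR w').eval (q : ℝ)| ≤
            C * k * (q : ℝ) ^ (-(k : ℝ) / 3 + 4) *
              (((APolyR w).eval (q : ℝ) - (APolyR w').eval (q : ℝ)) /
                (APolyR w').eval (q : ℝ)) := by

  refine ⟨1000000, by norm_num, 100, ?_⟩
  intro q k hq hk w w' hw hw' hlt2 αm αm' hmem hroot hmem' hroot'
  haveI : Inhabited (Fin q) := ⟨⟨0, by omega⟩⟩
  have hk1 : 1 ≤ k := by omega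
  set r : ℝ := (q:ℝ) with hrdef
  have hr : (2:ℝ) ≤ r := by rw [hrdef]; exact_mod_cast hq
  have hr0 : (0:ℝ) < r := by linarith
  have hr1 : (1:ℝ) ≤ r := by linarith
  set β : ℕ → ℝ := fun d => (acorrBit w (d+1) : ℝ) with hβdef
  set β' : ℕ → ℝ := fun d => (acorrBit w' (d+1) : ℝ) with hβ'def
  have hb01 : ∀ d, β d = 0 ∨ β d = 1 := by
    intro d
    rcases acorrBit_zero_or_one (w := w) (d+1) with h | h <;>
      [left; right] <;> simp [hβdef, h]
  have hb01' : ∀ d, β' d = 0 ∨ β' d = 1 := by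
    intro d
    rcases acorrBit_zero_or_one (w := w') (d+1) with h | h <;>
      [left; right] <;> simp [hβ'def, h]
  have hβb : ∀ d, 0 ≤ β d ∧ β d ≤ 1 := by
    intro d; rcases hb01 d with h | h <;> rw [h] <;> norm_num
  have hβ'b : ∀ d, 0 ≤ β' d ∧ β' d ≤ 1 := by
    intro d; rcases hb01' d with h | h <;> rw [h] <;> norm_num
  have hβk : β (k-1) = 1 := by
    have h1 : acorrBit w w.length = 1 := acorrBit_top (by omega)
    rw [hw] at h1
    simp only [hβdef]
    rw [show k-1+1 = k by omega, h1]
    norm_num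
  have hβ'k : β' (k-1) = 1 := by
    have h1 : acorrBit w' w'.length = 1 := acorrBit_top (by omega)
    rw [hw'] at h1
    simp only [hβ'def]
    rw [show k-1+1 = k by omega, h1]
    norm_num
  have hev2 : ∑ d ∈ range k, β' d * (2:ℝ)^d < ∑ d ∈ range k, β d * (2:ℝ)^d := by
    have h1 := APolyR_eval w (2:ℝ)
    have h2 := APolyR_eval w' (2:ℝ)
    rw [hw] at h1; rw [hw'] at h2
    rw [h1, h2] at hlt2
    exact hlt2
  set V := (range k).filter (fun d => acorrBit w (d+1) ≠ acorrBit w' (d+1)) with hV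
  have hVne : V.Nonempty := by
    by_contra hemp
    rw [Finset.not_nonempty_iff_eq_empty, Finset.filter_eq_empty_iff] at hemp
    have heq : ∑ d ∈ range k, β' d * (2:ℝ)^d = ∑ d ∈ range k, β d * (2:ℝ)^d := by
      apply Finset.sum_congr rfl
      intro d hd
      have h3 := hemp hd
      push_neg at h3
      simp [hβdef, hβ'def, h3]
    linarith [hev2, heq.le]
  set t := V.max' hVne with ht_def
  have htV : t ∈ V := Finset.max'_mem V hVne
  have htk : t < k := by
    have := (Finset.mem_filter.mp htV).1
    simpa using this
  have htne : acorrBit w (t+1) ≠ acorrBit w' (t+1) := (Finset.mem_filter.mp htV).2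
  have hagN : ∀ d, t < d → d < k → acorrBit w (d+1) = acorrBit w' (d+1) := by
    intro d h1 h2
    by_contra hne
    have hdV : d ∈ V := Finset.mem_filter.mpr ⟨Finset.mem_range.mpr h2, hne⟩
    have := Finset.le_max' V d hdV
    omega
  have hagR : ∀ d, t < d → d < k → β d = β' d := by
    intro d h1 h2
    simp [hβdef, hβ'def, hagN d h1 h2]
  have hbtN : acorrBit w (t+1) = 1 ∧ acorrBit w' (t+1) = 0 := by
    rcases acorrBit_zero_or_one (w := w) (t+1) with h1 | h1 <;>
      rcases acorrBit_zero_or_one (w := w') (t+1) with h2 | h2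
    · exact absurd (h1.trans h2.symm) htne
    · exfalso
      have hβt : β t = 0 := by simp [hβdef, h1]
      have hβ't : β' t = 1 := by simp [hβ'def, h2]
      have := topdiff (by norm_num : (2:ℝ) ≤ 2) hb01' hb01 htk hβ't hβt
        (fun d ha hb => (hagR d ha hb).symm)
      linarith
    · exact ⟨h1, h2⟩
    · exact absurd (h1.trans h2.symm) htne
  have hβt1 : β t = 1 := by simp [hβdef, hbtN.1]
  have hβ't0 : β' t = 0 := by simp [hβ'def, hbtN.2]
  have ht2 : t + 2 ≤ k := by
    rcases Nat.lt_or_ge (t+1) k with h | h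
    · omega
    · exfalso
      have he : t = k - 1 := by omega
      rw [he, hβ'k] at hβ't0
      exact one_ne_zero hβ't0
  have hD1 : 1 ≤ (∑ d ∈ range k, β d * r^d) - (∑ d ∈ range k, β' d * r^d) :=
    topdiff hr hb01 hb01' htk hβt1 hβ't0 hagR
  -- interval facts
  have hzpow : (r:ℝ) ^ (-((k:ℤ) - 2)) = (r ^ (k-2 : ℕ))⁻¹ := by
    rw [zpow_neg]
    congr 1
    rw [show (k:ℤ) - 2 = ((k-2 : ℕ) : ℤ) by omega, zpow_natCast]
  have hpk2pos : (0:ℝ) < r ^ (k-2:ℕ) := by positivity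
  have hα1 : αm < r := hmem.2
  have hα1' : αm' < r := hmem'.2
  have hα2 : (r - αm) * r^(k-2:ℕ) ≤ 1 := by
    have h1 : r - αm < (r ^ (k-2:ℕ))⁻¹ := by
      have h0 := hmem.1
      rw [hzpow] at h0
      linarith
    have h2 := mul_lt_mul_of_pos_right h1 hpk2pos
    rw [inv_mul_cancel₀ (ne_of_gt hpk2pos)] at h2
    linarith
  have hα2' : (r - αm') * r^(k-2:ℕ) ≤ 1 := by
    have h1 : r - αm' < (r ^ (k-2:ℕ))⁻¹ := by
      have h0 := hmem'.1
      rw [hzpow] at h0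
      linarith
    have h2 := mul_lt_mul_of_pos_right h1 hpk2pos
    rw [inv_mul_cancel₀ (ne_of_gt hpk2pos)] at h2
    linarith
  -- roots
  have hroot1 : (r - αm) * (∑ d ∈ range k, β d * αm^d) = 1 := by
    have h1 := PPolyR_eval q w αm
    rw [hw] at h1
    have h2 : (PPolyR q w).eval αm = 0 := hroot
    rw [h1] at h2
    linear_combination -h2
  have hroot1' : (r - αm') * (∑ d ∈ range k, β' d * αm'^d) = 1 := by
    have h1 := PPolyR_eval q w' αm'
    rw [hw'] at h1
    have h2 : (PPolyR q w').IsRoot αm' := hroot'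
    rw [Polynomial.IsRoot, h1] at h2
    linear_combination -h2
  -- KEY
  have hsum_sub : ∀ x : ℝ, ∑ d ∈ range k, (β d - β' d) * x^d
      = (∑ d ∈ range k, β d * x^d) - (∑ d ∈ range k, β' d * x^d) := by
    intro x
    rw [← Finset.sum_sub_distrib]
    apply Finset.sum_congr rfl
    intro d _
    ring
  set B := k/3 + 1 with hB
  have hBk : B ≤ k := by omega
  set E : ℝ := r ^ (k - B + 2 : ℕ) with hE
  have hE1 : (1:ℝ) ≤ E := one_le_pow₀ hr1
  have hD1' : (1:ℝ) ≤ ∑ d ∈ range k, ((acorrBit w (d+1) : ℝ) - (acorrBit w' (d+1) : ℝ)) * r^d := by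
    have h0 := hsum_sub r
    simp only [hβdef, hβ'def] at h0
    rw [h0]
    exact hD1
  have hKEY0 := key hq hk w w' hw hw' (by omega : t ≤ k - 2) hbtN.1 hbtN.2 hagN hD1'
  have hKEY : r^t ≤ 12 * ((∑ d ∈ range k, β d * r^d) - (∑ d ∈ range k, β' d * r^d)) * E := by
    have h0 := hsum_sub r
    simp only [hβdef, hβ'def] at h0
    rw [← h0]
    exact hKEY0
  have hN3 : k ≤ 3*B := by omega
  clear_value B
  have hNR : (k:ℝ) ≤ 3*(B:ℝ) := by exact_mod_cast hN3
  -- Qpow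
  set Qpow : ℝ := r ^ (-(k:ℝ)/3 + 4) with hQp
  have hQpow : (0:ℝ) < Qpow := Real.rpow_pos_of_pos hr0 _
  have hrgt1 : (1:ℝ) < r := by linarith
  have hexple : ((((4:ℤ) - (B:ℤ)) : ℤ) : ℝ) ≤ -(k:ℝ)/3 + 4 := by
    push_cast
    linarith
  have h5' : r ^ (((4:ℤ) - (B:ℤ)) : ℤ) ≤ Qpow := by
    rw [← Real.rpow_intCast r ((4:ℤ) - (B:ℤ)), hQp]
    exact (Real.rpow_le_rpow_left_iff hrgt1).mpr hexple
  have h6 : r ^ (((4:ℤ) - (B:ℤ)) : ℤ) * r ^ ((k-1:ℕ)) = r ^ ((k - B + 3 : ℕ)) := by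
    rw [← zpow_natCast r (k-1), ← zpow_natCast r (k-B+3), ← zpow_add₀ (ne_of_gt hr0)]
    congr 1
    have e1 : ((k-1:ℕ):ℤ) = (k:ℤ) - 1 := by omega
    have e2 : ((k-B+3:ℕ):ℤ) = (k:ℤ) - B + 3 := by omega
    rw [e1, e2]
    ring
  have hEr : E * r = r ^ (k - B + 3 : ℕ) := by
    rw [hE, ← pow_succ]
  have h7 : r ^ ((k-B+3:ℕ)) ≤ Qpow * r^(k-1:ℕ) := by
    rw [← h6]
    exact mul_le_mul_of_nonneg_right h5' (by positivity)
  have hQ : 57606 * (E * r) ≤ 250000 * (Qpow * r^(k-1:ℕ)) := by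
    rw [hEr]
    have hp := pow_pos hr0 (k-B+3)
    linarith
  -- rewrite the goal
  have hcw : cwCoef q w' αm' / cwCoef q w αm
      = ((∑ d ∈ range k, β d * αm^d) + (αm - r) * (∑ d ∈ range k, β d * (d * αm^(d-1)))) /
        ((∑ d ∈ range k, β' d * αm'^d) + (αm' - r) * (∑ d ∈ range k, β' d * (d * αm'^(d-1)))) := by
    unfold cwCoef
    rw [one_div_div_one_div]
    have h1 := PPolyR_deriv_eval q w αm
    have h2 := PPolyR_deriv_eval q w' αm'
    rw [hw] at h1
    rw [hw'] at h2
    rw [h1, h2]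
  have hAq : (APolyR w).eval r = ∑ d ∈ range k, β d * r^d := by
    have h1 := APolyR_eval w r
    rw [hw] at h1
    exact h1
  have hAq' : (APolyR w').eval r = ∑ d ∈ range k, β' d * r^d := by
    have h1 := APolyR_eval w' r
    rw [hw'] at h1
    exact h1
  rw [hcw, hAq, hAq']
  exact main_est hr hk ht2 hβb hβ'b hβk hβ'k hagR hα1 hα2 hα1' hα2'
    hroot1 hroot1' hD1 hE1 hQpow hKEY hQ
end

section
/- There exists a constant C > 0 such that for every integer q ≥ 2, every integer k ≥ 9, and any two words w and w' of the same length k over an alphabet of q letters with the autocorrelation of w larger than the autocorrelation of w', one has |A_w(q)²·A_{w'}'(q) − A_{w'}(q)²·A_w'(q)| / (A_{w'}(q)³·A_w(q)) ≤ C·k·q^{-k/3+4}·(A_w(q) − A_{w'}(q)) / A_{w'}(q). -/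
/-!
Let `A = A_w(q)`, `B = A_{w'}(q)` and let `j` be the top position where the autocorrelations
differ, so that `b_{j+1} = 1` and `b'_{j+1} = 0`. Comparing base-`q` expansions gives
`q^(k-1) ≤ B < A ≤ 2 q^(k-1)`, `q |A'_w(q)| ≤ k A` and `q |A'_w(q) - A'_{w'}(q)| ≤ k D`, where
`D = ∑ |b_i - b'_i| q^(i-1) ≤ 2 q^j`; this reduces the claim to
`D + 2 (A - B) ≤ 10 q^(k/2+3) (A - B)`. If `j < k/2 + 4` this follows from `A - B ≥ 1`.
Otherwise, two consecutive ones among the bits `b'_i` with `i > k/2` would be periods `p + 1`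
and `p` of `w'`, so by Fine–Wilf `w'` would have period `1` and all its bits would be `1`,
contradicting `b'_{j+1} = 0`. Hence the bits of `w'` below `j` weigh at most `3 q^j / 4`, so
`A - B ≥ q^j / 4 ≥ D / 8`.
-/

open Finset Polynomial

theorem List.HasPeriod.of_one {α : Type*} {w : List α} (h : w.HasPeriod 1) (p : ℕ) :
    w.HasPeriod p := by
  rw [List.hasPeriod_iff_forall_getElem?_mod] at h
  rw [List.hasPeriod_iff_getElem?]
  intro i hi
  rw [h i (by omega), h (i + p) (by omega), Nat.mod_one, Nat.mod_one]

section Words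

variable {α : Type*} [DecidableEq α]

theorem acorrBit_le_one (w : List α) (i : ℕ) : acorrBit w i ≤ 1 := by
  unfold acorrBit; split <;> simp

theorem acorrBit_length (w : List α) : acorrBit w w.length = 1 := by
  simp [acorrBit]

theorem acorrBit_eq_one_iff {w : List α} {i : ℕ} (hi : i ≤ w.length) :
    acorrBit w i = 1 ↔ w.HasPeriod (w.length - i) := by
  have : acorrBit w i = 1 ↔ w.take i = w.drop (w.length - i) := by
    unfold acorrBit; split_ifs <;> simp_all
  rw [this, List.hasPeriod_iff_getElem?, Nat.sub_sub_self hi, List.ext_getElem?_iff]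
  simp only [List.getElem?_take, List.getElem?_drop]
  constructor
  · intro h m hm
    simpa [hm, Nat.add_comm] using h m
  · intro h m
    split_ifs with hm
    · rw [h m hm, Nat.add_comm]
    · rw [List.getElem?_eq_none (by omega)]

theorem acorrBit_eq_one_of_consecutive {w : List α} {i : ℕ} (hlen : w.length ≤ 2 * i + 2)
    (hi : i + 1 ≤ w.length) (h₀ : acorrBit w i = 1) (h₁ : acorrBit w (i + 1) = 1) {l : ℕ}
    (hl : l ≤ w.length) : acorrBit w l = 1 := by
  obtain ⟨p, hp⟩ : ∃ p, w.length - i = p + 1 := ⟨w.length - (i + 1), by omega⟩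
  rw [acorrBit_eq_one_iff (by omega), hp] at h₀
  rw [acorrBit_eq_one_iff hi, show w.length - (i + 1) = p by omega] at h₁
  have hgcd : (p + 1).gcd p = 1 := by simp
  have hper : w.HasPeriod 1 := hgcd ▸ h₀.gcd h₁ (by omega)
  exact (acorrBit_eq_one_iff hl).2 (hper.of_one _)

end Words

theorem Finset.sum_range_eq_sum_range_add_of_eq_zero {M : Type*} [AddCommMonoid M] {f : ℕ → M}
    {j n : ℕ} (hj : j < n) (hf : ∀ i, j < i → i < n → f i = 0) :
    ∑ i ∈ range n, f i = ∑ i ∈ range j, f i + f j := by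
  rw [← sum_range_succ]
  refine (sum_subset (range_subset_range.2 hj) fun i hi hij => hf i ?_ ?_).symm <;>
    simp_all

section Digits

variable {x : ℝ}

theorem sum_mul_pow_le_pow_sub_one (hx : 2 ≤ x) {a : ℕ → ℝ} (ha : ∀ i, a i ≤ 1) (n : ℕ) :
    ∑ i ∈ range n, a i * x ^ i ≤ x ^ n - 1 := by
  induction n with
  | zero => simp
  | succ n ih =>
    have hxn : 0 ≤ x ^ n := by positivity
    rw [sum_range_succ, pow_succ]
    nlinarith [mul_le_of_le_one_left hxn (ha n)]

theorem exists_top_digit_diff (hx : 2 ≤ x) {c c' : ℕ → ℕ} (hc : ∀ i, c i ≤ 1)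
    (hc' : ∀ i, c' i ≤ 1) {n : ℕ}
    (h : ∑ i ∈ range n, (c' i : ℝ) * x ^ i < ∑ i ∈ range n, (c i : ℝ) * x ^ i) :
    ∃ j < n, c j = 1 ∧ c' j = 0 ∧ ∀ i, j < i → i < n → c i = c' i := by
  induction n with
  | zero => simp at h
  | succ n ih =>
    rw [sum_range_succ, sum_range_succ] at h
    obtain hlt | heq | hgt := lt_trichotomy (c n) (c' n)
    · have hcn : c n = 0 := by have := hc' n; omega
      have hc'n : c' n = 1 := by have := hc' n; omega
      have hlow := sum_mul_pow_le_pow_sub_one hx (fun i => Nat.cast_le_one.2 (hc i)) n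
      have hlow' : 0 ≤ ∑ i ∈ range n, (c' i : ℝ) * x ^ i := by positivity
      simp only [hcn, hc'n, Nat.cast_zero, Nat.cast_one] at h
      linarith
    · obtain ⟨j, hj, hcj, hc'j, hagree⟩ := ih (by rw [heq] at h; linarith)
      refine ⟨j, by omega, hcj, hc'j, fun i hji hin => ?_⟩
      rcases Nat.lt_succ_iff_lt_or_eq.1 hin with hin | rfl
      exacts [hagree i hji hin, heq]
    · have := hc n
      exact ⟨n, by omega, by omega, by omega, fun i _ _ => by omega⟩

theorem pow_sub_sum_le_sum_sub_mul_pow (hx : 0 ≤ x) {c c' : ℕ → ℕ} {n j : ℕ} (hj : j < n)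
    (hcj : c j = 1) (hc'j : c' j = 0) (hagree : ∀ i, j < i → i < n → c i = c' i) :
    x ^ j - ∑ i ∈ range j, (c' i : ℝ) * x ^ i ≤ ∑ i ∈ range n, ((c i : ℝ) - c' i) * x ^ i := by
  rw [sum_range_eq_sum_range_add_of_eq_zero hj fun i hji hin => by simp [hagree i hji hin],
    hcj, hc'j]
  have hlow : ∑ i ∈ range j, -((c' i : ℝ) * x ^ i) ≤ ∑ i ∈ range j, ((c i : ℝ) - c' i) * x ^ i :=
    sum_le_sum fun i _ => by nlinarith [pow_nonneg hx i, (Nat.cast_nonneg (c i) : (0 : ℝ) ≤ c i)]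
  rw [sum_neg_distrib] at hlow
  push_cast
  linarith

theorem sum_abs_sub_mul_pow_le (hx : 2 ≤ x) {c c' : ℕ → ℕ} (hc : ∀ i, c i ≤ 1)
    (hc' : ∀ i, c' i ≤ 1) {n j : ℕ} (hj : j < n) (hagree : ∀ i, j < i → i < n → c i = c' i) :
    ∑ i ∈ range n, |(c i : ℝ) - c' i| * x ^ i ≤ 2 * x ^ j := by
  have hdigit : ∀ i, |(c i : ℝ) - c' i| ≤ 1 := fun i =>
    abs_sub_le_of_nonneg_of_le (Nat.cast_nonneg _) (Nat.cast_le_one.2 (hc i))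
      (Nat.cast_nonneg _) (Nat.cast_le_one.2 (hc' i))
  rw [sum_range_eq_sum_range_add_of_eq_zero hj fun i hji hin => by simp [hagree i hji hin]]
  have hlow := sum_mul_pow_le_pow_sub_one hx hdigit j
  have htop := mul_le_of_le_one_left (pow_nonneg (by linarith : (0 : ℝ) ≤ x) j) (hdigit j)
  linarith

theorem three_mul_sum_Ico_le_of_no_adjacent (hx : 2 ≤ x) {a : ℕ → ℝ} (ha : ∀ i, a i ≤ 1)
    {s n : ℕ} (hadj : ∀ m, s ≤ m → m + 2 ≤ n → a m = 0 ∨ a (m + 1) = 0) :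
    3 * x * ∑ i ∈ Ico s n, a i * x ^ i ≤ 4 * x ^ n := by
  induction n using Nat.strong_induction_on with
  | _ n ih =>
    have hpow : ∀ i, 0 ≤ x ^ i := fun i => pow_nonneg (by linarith) i
    rcases le_or_gt n s with hns | hsn
    · rw [Ico_eq_empty_of_le hns, sum_empty, mul_zero]
      exact mul_nonneg (by norm_num) (hpow n)
    obtain ⟨m, rfl⟩ | ⟨m, hsm, rfl⟩ : n = s + 1 ∨ ∃ m, s ≤ m ∧ n = m + 2 := by
      rcases Nat.lt_or_ge n (s + 2) with h | h
      · left; omega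
      · right; exact ⟨n - 2, by omega, by omega⟩
    · rw [Nat.Ico_succ_singleton, sum_singleton, pow_succ]
      nlinarith [mul_le_mul_of_nonneg_left (mul_le_of_le_one_left (hpow s) (ha s))
        (by linarith : (0 : ℝ) ≤ 3 * x), mul_nonneg (hpow s) (by linarith : (0 : ℝ) ≤ x)]
    · have hpair : a m * x ^ m + a (m + 1) * x ^ (m + 1) ≤ x ^ (m + 1) := by
        have hmono : x ^ m ≤ x ^ (m + 1) := pow_le_pow_right₀ (by linarith) m.le_succ
        rcases hadj m hsm le_rfl with h | h <;> rw [h] <;>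
          nlinarith [mul_le_of_le_one_left (hpow m) (ha m),
            mul_le_of_le_one_left (hpow (m + 1)) (ha (m + 1))]
      have hrest := ih m (by omega) fun l hsl hl => hadj l hsl (by omega)
      have hx4 : 4 * x ^ m ≤ x * x ^ (m + 1) := by
        rw [pow_succ]
        nlinarith [mul_nonneg (mul_nonneg (by linarith : (0 : ℝ) ≤ x - 2)
          (by linarith : (0 : ℝ) ≤ x + 2)) (hpow m)]
      rw [sum_Ico_succ_top (by omega), sum_Ico_succ_top hsm, add_assoc, mul_add]
      have := mul_le_mul_of_nonneg_left hpair (by linarith : (0 : ℝ) ≤ 3 * x)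
      rw [show x ^ (m + 2) = x * x ^ (m + 1) by ring]
      linarith

theorem mul_abs_sum_mul_pow_pred_le (hx : 0 ≤ x) (a : ℕ → ℝ) (n : ℕ) :
    x * |∑ i ∈ range n, a i * (i * x ^ (i - 1))| ≤ n * ∑ i ∈ range n, |a i| * x ^ i := by
  have hshift : ∀ i : ℕ, x * (i * x ^ (i - 1)) = i * x ^ i := by
    rintro (_ | i)
    · simp
    · rw [Nat.add_sub_cancel, pow_succ]; ring
  calc x * |∑ i ∈ range n, a i * (i * x ^ (i - 1))|
      ≤ x * ∑ i ∈ range n, |a i * (i * x ^ (i - 1))| :=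
        mul_le_mul_of_nonneg_left (abs_sum_le_sum_abs _ _) hx
    _ = ∑ i ∈ range n, |a i| * (i * x ^ i) := by
        rw [mul_sum]
        refine sum_congr rfl fun i _ => ?_
        rw [← hshift, abs_mul, abs_of_nonneg (by positivity : 0 ≤ (i : ℝ) * x ^ (i - 1))]
        ring
    _ ≤ ∑ i ∈ range n, |a i| * (n * x ^ i) := by
        refine sum_le_sum fun i hi => ?_
        have : (i : ℝ) ≤ n := by exact_mod_cast (mem_range.1 hi).le
        gcongr
    _ = n * ∑ i ∈ range n, |a i| * x ^ i := by
        rw [mul_sum]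
        exact sum_congr rfl fun i _ => by ring

end Digits

section AutocorrelationPolynomial

variable {α : Type*} [DecidableEq α] {x : ℝ}

theorem eval_APolyR (w : List α) (x : ℝ) :
    (APolyR w).eval x = ∑ i ∈ range w.length, (acorrBit w (i + 1) : ℝ) * x ^ i := by
  simp [APolyR, eval_finsetSum]

theorem eval_derivative_APolyR (w : List α) (x : ℝ) :
    (APolyR w).derivative.eval x
      = ∑ i ∈ range w.length, (acorrBit w (i + 1) : ℝ) * (i * x ^ (i - 1)) := by
  simp only [APolyR, derivative_sum, derivative_C_mul_X_pow, eval_finsetSum, eval_mul, eval_C,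
    eval_pow, eval_X]
  exact sum_congr rfl fun i _ => by ring

theorem mul_abs_eval_derivative_APolyR_le (hx : 0 ≤ x) (w : List α) :
    x * |(APolyR w).derivative.eval x| ≤ w.length * (APolyR w).eval x := by
  simpa [eval_derivative_APolyR, eval_APolyR] using
    mul_abs_sum_mul_pow_pred_le hx (fun i => (acorrBit w (i + 1) : ℝ)) w.length

theorem pow_pred_length_le_eval_APolyR (hx : 0 ≤ x) {w : List α} (hw : w ≠ []) :
    x ^ (w.length - 1) ≤ (APolyR w).eval x := by
  have hk : w.length - 1 + 1 = w.length := Nat.succ_pred_eq_of_pos (List.length_pos_iff.2 hw)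
  rw [eval_APolyR]
  refine le_of_eq_of_le ?_ (single_le_sum (fun i _ => by positivity)
    (mem_range.2 (Nat.sub_lt_self one_pos (List.length_pos_iff.2 hw))))
  rw [hk, acorrBit_length, Nat.cast_one, one_mul]

theorem eval_APolyR_le_two_mul_pow (hx : 2 ≤ x) (w : List α) :
    (APolyR w).eval x ≤ 2 * x ^ (w.length - 1) := by
  rw [eval_APolyR]
  have hbit : ∀ i, (acorrBit w (i + 1) : ℝ) ≤ 1 := fun i => Nat.cast_le_one.2 (acorrBit_le_one _ _)
  cases w.length with
  | zero => rw [sum_range_zero]; positivity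
  | succ m =>
    rw [sum_range_succ, Nat.add_sub_cancel]
    have hlow := sum_mul_pow_le_pow_sub_one hx hbit m
    have htop := mul_le_of_le_one_left (pow_nonneg (by linarith : (0 : ℝ) ≤ x) m) (hbit m)
    linarith

end AutocorrelationPolynomial

section Comparison

variable {α : Type*} [DecidableEq α] {x : ℝ} {w w' : List α}

noncomputable def acorrDist (w w' : List α) (x : ℝ) : ℝ :=
  ∑ i ∈ range w.length, |(acorrBit w (i + 1) : ℝ) - acorrBit w' (i + 1)| * x ^ i

theorem eval_APolyR_sub_eval_APolyR (hlen : w'.length = w.length) (x : ℝ) :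
    (APolyR w).eval x - (APolyR w').eval x
      = ∑ i ∈ range w.length, ((acorrBit w (i + 1) : ℝ) - acorrBit w' (i + 1)) * x ^ i := by
  rw [eval_APolyR, eval_APolyR, hlen, ← sum_sub_distrib]
  exact sum_congr rfl fun i _ => by ring

theorem eval_APolyR_sub_le_acorrDist (hx : 0 ≤ x) (hlen : w'.length = w.length) :
    (APolyR w).eval x - (APolyR w').eval x ≤ acorrDist w w' x := by
  rw [eval_APolyR_sub_eval_APolyR hlen]
  exact sum_le_sum fun i _ => mul_le_mul_of_nonneg_right (le_abs_self _) (pow_nonneg hx i)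

theorem mul_abs_sub_eval_derivative_APolyR_le (hx : 0 ≤ x) (hlen : w'.length = w.length) :
    x * |(APolyR w).derivative.eval x - (APolyR w').derivative.eval x|
      ≤ w.length * acorrDist w w' x := by
  rw [eval_derivative_APolyR, eval_derivative_APolyR, hlen, ← sum_sub_distrib]
  simpa [sub_mul, acorrDist] using mul_abs_sum_mul_pow_pred_le hx
    (fun i => (acorrBit w (i + 1) : ℝ) - acorrBit w' (i + 1)) w.length

theorem exists_top_acorrBit_diff (hlen : w'.length = w.length)
    (hlt : (APolyR w').eval 2 < (APolyR w).eval 2) :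
    ∃ j < w.length, acorrBit w (j + 1) = 1 ∧ acorrBit w' (j + 1) = 0 ∧
      ∀ i, j < i → i < w.length → acorrBit w (i + 1) = acorrBit w' (i + 1) := by
  rw [eval_APolyR, eval_APolyR, hlen] at hlt
  exact exists_top_digit_diff le_rfl (fun i => acorrBit_le_one w (i + 1))
    (fun i => acorrBit_le_one w' (i + 1)) hlt

theorem one_le_eval_APolyR_sub (hx : 2 ≤ x) (hlen : w'.length = w.length)
    (hlt : (APolyR w').eval 2 < (APolyR w).eval 2) :
    1 ≤ (APolyR w).eval x - (APolyR w').eval x := by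
  obtain ⟨j, hj, hcj, hc'j, hagree⟩ := exists_top_acorrBit_diff hlen hlt
  rw [eval_APolyR_sub_eval_APolyR hlen]
  have hlow := pow_sub_sum_le_sum_sub_mul_pow (x := x) (by linarith) hj hcj hc'j hagree
  have hS := sum_mul_pow_le_pow_sub_one hx
    (fun i => Nat.cast_le_one.2 (acorrBit_le_one w' (i + 1))) j
  linarith

theorem four_mul_sum_acorrBit_le (hx : 2 ≤ x) {j : ℕ} (hj : j < w.length)
    (hbit : acorrBit w (j + 1) = 0) (hjlen : w.length / 2 + 4 ≤ j) :
    4 * ∑ i ∈ range j, (acorrBit w (i + 1) : ℝ) * x ^ i ≤ 3 * x ^ j := by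
  set s := w.length / 2
  have hbit₁ : ∀ i, (acorrBit w (i + 1) : ℝ) ≤ 1 := fun i =>
    Nat.cast_le_one.2 (acorrBit_le_one w (i + 1))
  have hadj : ∀ m, s ≤ m → m + 2 ≤ j →
      (acorrBit w (m + 1) : ℝ) = 0 ∨ (acorrBit w (m + 1 + 1) : ℝ) = 0 := by
    intro m hsm hmj
    by_contra! h
    have h₀ : acorrBit w (m + 1) = 1 := by
      have := acorrBit_le_one w (m + 1); have : acorrBit w (m + 1) ≠ 0 := by exact_mod_cast h.1
      omega
    have h₁ : acorrBit w (m + 2) = 1 := by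
      have := acorrBit_le_one w (m + 2); have : acorrBit w (m + 2) ≠ 0 := by exact_mod_cast h.2
      omega
    have := acorrBit_eq_one_of_consecutive (by omega) (by omega) h₀ h₁ (l := j + 1) (by omega)
    omega
  have hhigh := three_mul_sum_Ico_le_of_no_adjacent hx hbit₁ hadj
  have hlow := sum_mul_pow_le_pow_sub_one hx hbit₁ s
  have hgap : 16 * x ^ s ≤ x ^ j := by
    rw [show j = s + 4 + (j - (s + 4)) by omega, pow_add, pow_add]
    have h16 : (16 : ℝ) ≤ x ^ 4 := by
      linarith [pow_le_pow_left₀ (by norm_num : (0 : ℝ) ≤ 2) hx 4]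
    have hxs : 0 ≤ x ^ s := pow_nonneg (by linarith) s
    calc 16 * x ^ s ≤ x ^ s * x ^ 4 := by nlinarith
      _ ≤ x ^ s * x ^ 4 * x ^ (j - (s + 4)) :=
        le_mul_of_one_le_right (by positivity) (one_le_pow₀ (by linarith))
  have hhigh₀ : 0 ≤ ∑ i ∈ Ico s j, (acorrBit w (i + 1) : ℝ) * x ^ i := by positivity
  rw [← sum_range_add_sum_Ico _ (by omega : s ≤ j)]
  nlinarith

theorem acorrDist_add_two_mul_le (hx : 2 ≤ x) (hlen : w'.length = w.length)
    (hlt : (APolyR w').eval 2 < (APolyR w).eval 2) :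
    acorrDist w w' x + 2 * ((APolyR w).eval x - (APolyR w').eval x)
      ≤ 10 * x ^ (w.length / 2 + 3) * ((APolyR w).eval x - (APolyR w').eval x) := by
  obtain ⟨j, hj, hcj, hc'j, hagree⟩ := exists_top_acorrBit_diff hlen hlt
  have hd₁ := one_le_eval_APolyR_sub hx hlen hlt
  have hdD := eval_APolyR_sub_le_acorrDist (x := x) (by linarith) hlen
  have hD : acorrDist w w' x ≤ 2 * x ^ j :=
    sum_abs_sub_mul_pow_le hx (fun i => acorrBit_le_one w (i + 1))
      (fun i => acorrBit_le_one w' (i + 1)) hj hagree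
  have hR : 1 ≤ x ^ (w.length / 2 + 3) := one_le_pow₀ (by linarith)
  rcases lt_or_ge j (w.length / 2 + 4) with hsmall | hlarge
  · have hjR : x ^ j ≤ x ^ (w.length / 2 + 3) := pow_le_pow_right₀ (by linarith) (by omega)
    nlinarith
  · have hS := four_mul_sum_acorrBit_le hx (by omega) hc'j (by omega : w'.length / 2 + 4 ≤ j)
    have hlow := pow_sub_sum_le_sum_sub_mul_pow (x := x) (by linarith) hj hcj hc'j hagree
    rw [← eval_APolyR_sub_eval_APolyR hlen] at hlow
    nlinarith

end Comparison

theorem mul_abs_sq_mul_sub_sq_mul_le {x n A B A' B' D : ℝ} (hx : 0 ≤ x) (hB : 0 ≤ B)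
    (hBA : B ≤ A) (hA' : x * |A'| ≤ n * A) (hAB' : x * |A' - B'| ≤ n * D) :
    x * |A ^ 2 * B' - B ^ 2 * A'| ≤ n * A ^ 2 * (D + 2 * (A - B)) := by
  have hsplit : A ^ 2 * B' - B ^ 2 * A' = -(A ^ 2 * (A' - B')) + (A - B) * (A + B) * A' := by
    ring
  have htri := abs_add_le (-(A ^ 2 * (A' - B'))) ((A - B) * (A + B) * A')
  rw [abs_neg, abs_mul, abs_mul, abs_mul, abs_of_nonneg (sq_nonneg A),
    abs_of_nonneg (by linarith : 0 ≤ A - B), abs_of_nonneg (by linarith : 0 ≤ A + B),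
    ← hsplit] at htri
  calc x * |A ^ 2 * B' - B ^ 2 * A'|
      ≤ A ^ 2 * (x * |A' - B'|) + (A - B) * (A + B) * (x * |A'|) := by
        nlinarith [mul_le_mul_of_nonneg_left htri hx]
    _ ≤ A ^ 2 * (n * D) + (A - B) * (2 * A) * (n * A) := by
        have hAB : 0 ≤ A - B := by linarith
        gcongr
        · exact mul_nonneg hAB (by linarith)
        · linarith
    _ = n * A ^ 2 * (D + 2 * (A - B)) := by ring

theorem pow_div_two_add_three_le {x : ℝ} (hx : 1 ≤ x) (k : ℕ) :
    x ^ (k / 2 + 3) ≤ x ^ (-(k : ℝ) / 3 + 4) * x ^ k := by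
  rw [← Real.rpow_natCast, ← Real.rpow_natCast x k, ← Real.rpow_add (by linarith)]
  refine Real.rpow_le_rpow_of_exponent_le hx ?_
  have : ((k / 2 : ℕ) : ℝ) ≤ k / 2 := Nat.cast_div_le
  push_cast
  linarith [(Nat.cast_nonneg k : (0 : ℝ) ≤ k)]

/-- There is `C > 0` such that for all `q ≥ 2`, `k ≥ 9` and words `w, w'`
of common length `k` with the autocorrelation of `w` larger than that of `w'`,
`|A_w(q)²·A_{w'}'(q) − A_{w'}(q)²·A_w'(q)|/(A_{w'}(q)³·A_w(q))
  ≤ C·k·q^(−k/3+4)·(A_w(q) − A_{w'}(q))/A_{w'}(q)`. -/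
theorem stmt15 :
    ∃ C : ℝ, 0 < C ∧ ∀ (q k : ℕ), 2 ≤ q → 9 ≤ k →
      ∀ w w' : List (Fin q), w.length = k → w'.length = k →
        (APolyR w').eval 2 < (APolyR w).eval 2 →
        |(APolyR w).eval (q : ℝ) ^ 2 * (APolyR w').derivative.eval (q : ℝ) -
            (APolyR w').eval (q : ℝ) ^ 2 * (APolyR w).derivative.eval (q : ℝ)| /
          ((APolyR w').eval (q : ℝ) ^ 3 * (APolyR w).eval (q : ℝ)) ≤
        C * k * (q : ℝ) ^ (-(k : ℝ) / 3 + 4) *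
          (((APolyR w).eval (q : ℝ) - (APolyR w').eval (q : ℝ)) /
            (APolyR w').eval (q : ℝ)) := by
  refine ⟨20, by norm_num, ?_⟩
  rintro q k hq hk w w' rfl hlen hlt
  have hx : (2 : ℝ) ≤ q := by exact_mod_cast hq
  set x : ℝ := (q : ℝ)
  set A := (APolyR w).eval x
  set B := (APolyR w').eval x
  set E := x ^ (-(w.length : ℝ) / 3 + 4)
  have hd₁ : 1 ≤ A - B := one_le_eval_APolyR_sub hx hlen hlt
  have hB : x ^ (w.length - 1) ≤ B :=
    hlen ▸ pow_pred_length_le_eval_APolyR (by linarith) (List.ne_nil_of_length_pos (by omega))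
  have hAB : A ≤ 2 * B := (eval_APolyR_le_two_mul_pow hx w).trans (by linarith)
  have hB₀ : 0 < B := (pow_pos (by linarith) _).trans_le hB
  have hA₀ : 0 < A := by linarith
  have hnum := mul_abs_sq_mul_sub_sq_mul_le (by linarith) hB₀.le (by linarith)
    (mul_abs_eval_derivative_APolyR_le (x := x) (by linarith) w)
    (mul_abs_sub_eval_derivative_APolyR_le (x := x) (by linarith) hlen)
  have hkey := acorrDist_add_two_mul_le hx hlen hlt
  have hR : x ^ (w.length / 2 + 3) ≤ E * x * B := by
    calc x ^ (w.length / 2 + 3) ≤ E * x * x ^ (w.length - 1) := by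
          rw [mul_assoc, ← pow_succ', Nat.sub_add_cancel (by omega)]
          exact pow_div_two_add_three_le (by linarith) _
      _ ≤ E * x * B := by gcongr
  rw [div_le_iff₀ (by positivity), ← mul_le_mul_iff_of_pos_left (by linarith : 0 < x)]
  calc x * |A ^ 2 * (APolyR w').derivative.eval x - B ^ 2 * (APolyR w).derivative.eval x|
      ≤ w.length * A ^ 2 * (acorrDist w w' x + 2 * (A - B)) := hnum
    _ ≤ w.length * A ^ 2 * (10 * (E * x * B) * (A - B)) := by
        grw [hkey, hR]
    _ = (10 * w.length * E * x * (A - B) * A * B) * A := by ring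
    _ ≤ (10 * w.length * E * x * (A - B) * A * B) * (2 * B) := by gcongr
    _ = x * (20 * w.length * E * ((A - B) / B) * (B ^ 3 * A)) := by field_simp; ring
end

section
/- For every integer q ≥ 2 and every word w of length k ≥ 1 over an alphabet of q letters, the generating function of h_w satisfies, as an identity of formal power series over ℚ, (z^k + (1 − q·z)·Â_w(z)) · Σ_{n=0}^{∞} h_w(n)·z^n = z^k, where Â_w(z) = Σ_{i=1}^{k} b_i·z^{k−i} is the autocorrelation polynomial of w (so Â_w(z) = b_k·z^0 + b_{k-1}·z^1 + … + b_1·z^{k-1}). -/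
/-!
Let `f(n)` count the words of length `n` that avoid `w`, and `F` its generating function.
A word of length `n + 1` whose first `n` letters avoid `w` either avoids `w` or is a first hit, so
`f(n+1) + h(n+1) = q f(n)`, i.e. `(1 - qz) F = 1 - H`. For `u` avoiding `w`, the first occurrence
of `w` in `u ++ w` overhangs `u` by some `j < k` letters; cutting `u ++ w` after it yields a first
hit of length `n + k - j`, and the overlap of the two copies of `w` forces `b_{k-j} = 1`. This
decomposition is bijective, so `f(n) = ∑_{j<k} b_{k-j} h(n+k-j)`, i.e. `Â_w H = z^k F`.
Eliminating `F` gives the identity.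
-/

namespace WordOccurrence

section Lists

variable {α : Type*} {w l u v t : List α} {m n p j : ℕ}

def OccursAt (w l : List α) (p : ℕ) : Prop := (l.drop p).take w.length = w

def Avoids (w l : List α) : Prop := ∀ p, ¬ OccursAt w l p

def IsFirstHit (w l : List α) : Prop :=
  l.drop (l.length - w.length) = w ∧ ∀ p < l.length - w.length, ¬ OccursAt w l p

lemma occursAt_take_iff (h : p + w.length ≤ m) : OccursAt w (l.take m) p ↔ OccursAt w l p := by
  rw [OccursAt, OccursAt, List.drop_take, List.take_take, min_eq_left (by omega)]

lemma OccursAt.add_length_le (hw : w ≠ []) (h : OccursAt w l p) : p + w.length ≤ l.length := by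
  have hlen := congrArg List.length h
  rw [List.length_take, List.length_drop] at hlen
  have : 0 < w.length := List.length_pos_iff.mpr hw
  omega

lemma OccursAt.of_take (hw : w ≠ []) (h : OccursAt w (l.take m) p) : OccursAt w l p := by
  have hle := h.add_length_le hw
  rw [List.length_take] at hle
  exact (occursAt_take_iff (by omega)).mp h

lemma occursAt_iff_drop_eq (h : p + w.length = l.length) : OccursAt w l p ↔ l.drop p = w := by
  rw [OccursAt, List.take_of_length_le (by rw [List.length_drop]; omega)]

lemma occursAt_append_length (w u : List α) : OccursAt w (u ++ w) u.length := by
  rw [occursAt_iff_drop_eq (List.length_append ..).symm, List.drop_left]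

lemma IsFirstHit.not_avoids (h : IsFirstHit w l) : ¬ Avoids w l := fun hl =>
  hl _ (by rw [OccursAt, h.1, List.take_length])

lemma avoids_take_iff (hw : w ≠ []) (hl : l.length = n + 1) :
    Avoids w (l.take n) ↔ IsFirstHit w l ∨ Avoids w l := by
  constructor
  · intro hpre
    by_cases hl' : Avoids w l
    · exact Or.inr hl'
    obtain ⟨p, hp⟩ : ∃ p, OccursAt w l p := by simpa [Avoids] using hl'
    have hle := hp.add_length_le hw
    have early : ∀ p', p' + w.length ≤ n → ¬ OccursAt w l p' := fun p' hp' h =>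
      hpre p' ((occursAt_take_iff hp').mpr h)
    have hpe : p + w.length = l.length := by
      by_contra hne
      exact early p (by omega) hp
    refine Or.inl ⟨?_, fun p' hp' => early p' (by omega)⟩
    rw [← occursAt_iff_drop_eq (by omega)]
    rwa [show l.length - w.length = p by omega]
  · rintro (hfirst | hl') p hp
    · have hle := hp.add_length_le hw
      rw [List.length_take] at hle
      exact hfirst.2 p (by omega) (hp.of_take hw)
    · exact hl' p (hp.of_take hw)

open Classical in
noncomputable def firstOcc (w u : List α) : ℕ := Nat.find ⟨u.length, occursAt_append_length w u⟩

lemma occursAt_firstOcc (w u : List α) : OccursAt w (u ++ w) (firstOcc w u) := by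
  classical exact Nat.find_spec ⟨u.length, occursAt_append_length w u⟩

lemma not_occursAt_of_lt_firstOcc (h : p < firstOcc w u) : ¬ OccursAt w (u ++ w) p := by
  classical exact Nat.find_min ⟨u.length, occursAt_append_length w u⟩ h

lemma firstOcc_le_length (w u : List α) : firstOcc w u ≤ u.length := by
  classical exact Nat.find_min' _ (occursAt_append_length w u)

lemma length_lt_firstOcc_add (hu : Avoids w u) : u.length < firstOcc w u + w.length := by
  by_contra! h
  have hocc := (occursAt_take_iff h).mpr (occursAt_firstOcc w u)
  rw [List.take_left' rfl] at hocc
  exact hu _ hocc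

lemma isFirstHit_take_firstOcc (w u : List α) :
    IsFirstHit w ((u ++ w).take (firstOcc w u + w.length)) := by
  have hlen : ((u ++ w).take (firstOcc w u + w.length)).length = firstOcc w u + w.length := by
    rw [List.length_take, List.length_append]
    have := firstOcc_le_length w u
    omega
  rw [IsFirstHit, hlen, Nat.add_sub_cancel, ← occursAt_iff_drop_eq hlen.symm,
    occursAt_take_iff le_rfl]
  refine ⟨occursAt_firstOcc w u, fun p hp h => ?_⟩
  exact not_occursAt_of_lt_firstOcc hp ((occursAt_take_iff (by omega)).mp h)

lemma take_take_firstOcc (hu : Avoids w u) :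
    ((u ++ w).take (firstOcc w u + w.length)).take u.length = u := by
  rw [List.take_take, min_eq_left (length_lt_firstOcc_add hu).le, List.take_left' rfl]

/-- The first occurrence of `w` in `u ++ w` overhangs `u` by `j = u.length - firstOcc w u`
letters, and `w` then overlaps itself with shift `j`: this is where the autocorrelation enters. -/
lemma take_eq_drop_of_firstOcc (w u : List α) :
    w.take (w.length - (u.length - firstOcc w u)) = w.drop (u.length - firstOcc w u) := by
  have h := congrArg (List.drop (u.length - firstOcc w u)) (occursAt_firstOcc w u)
  rwa [List.drop_take, List.drop_drop, Nat.add_sub_cancel' (firstOcc_le_length w u),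
    List.drop_left' rfl] at h

lemma IsFirstHit.length_le (h : IsFirstHit w v) : w.length ≤ v.length := by
  have := congrArg List.length h.1
  rw [List.length_drop] at this
  omega

lemma IsFirstHit.take_append_eq (hv : IsFirstHit w v) (hlen : v.length = n + w.length - j)
    (hj : j < w.length) (hcorr : w.take (w.length - j) = w.drop j) :
    v.take n ++ w = v ++ w.drop (w.length - j) := by
  have hjn : j ≤ n := by have := hv.length_le; omega
  have hdrop : v.drop n = w.take (w.length - j) := by
    rw [hcorr, ← hv.1, List.drop_drop, hlen]
    congr 1
    omega
  conv_lhs => rw [← List.take_append_drop (w.length - j) w, ← hdrop, ← List.append_assoc,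
    List.take_append_drop]

lemma IsFirstHit.firstOcc_eq (hv : IsFirstHit w v) (h : u ++ w = v ++ t) :
    firstOcc w u = v.length - w.length := by
  classical
  have hvle := hv.length_le
  have hprefix : ∀ p, p + w.length ≤ v.length → (OccursAt w (u ++ w) p ↔ OccursAt w v p) :=
    fun p hp => by rw [h, ← occursAt_take_iff hp, List.take_left' rfl]
  rw [firstOcc, Nat.find_eq_iff]
  refine ⟨(hprefix _ (by omega)).mpr ?_,
    fun p hp hocc => hv.2 p hp ((hprefix p (by omega)).mp hocc)⟩
  rw [occursAt_iff_drop_eq (by omega)]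
  exact hv.1

lemma IsFirstHit.avoids_of_append_eq (hw : w ≠ []) (hv : IsFirstHit w v) (h : u ++ w = v ++ t)
    (hlt : u.length < v.length) : Avoids w u := by
  have hu : u = v.take u.length := by
    conv_lhs => rw [← List.take_left' (l₁ := u) (l₂ := w) rfl, h,
      List.take_append_of_le_length hlt.le]
  intro p hp
  have hle := hp.add_length_le hw
  rw [hu] at hp
  exact hv.2 p (by omega) (hp.of_take hw)

lemma finite_length_eq_and [Finite α] (n : ℕ) (P : List α → Prop) :
    Finite {l : List α // l.length = n ∧ P l} :=
  ((List.finite_length_eq α n).subset fun _ hl => hl.1).to_subtype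

def takeDropEquiv (P : List α → Prop) (n m : ℕ) :
    {l : List α // l.length = n + m ∧ P (l.take n)} ≃
      {l : List α // l.length = n ∧ P l} × List.Vector α m where
  toFun l := (⟨l.1.take n, by rw [List.length_take, l.2.1]; omega, l.2.2⟩,
    ⟨l.1.drop n, by rw [List.length_drop, l.2.1]; omega⟩)
  invFun x := ⟨x.1.1 ++ x.2.1, by rw [List.length_append, x.1.2.1, x.2.2],
    by rw [List.take_left' x.1.2.1]; exact x.1.2.2⟩
  left_inv l := Subtype.ext (List.take_append_drop n l.1)
  right_inv x := Prod.ext (Subtype.ext (List.take_left' x.1.2.1))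
    (Subtype.ext (List.drop_left' x.1.2.1))

lemma card_length_add_take [Fintype α] (P : List α → Prop) (n m : ℕ) :
    Nat.card {l : List α // l.length = n + m ∧ P (l.take n)} =
      Nat.card {l : List α // l.length = n ∧ P l} * Fintype.card α ^ m := by
  rw [Nat.card_congr (takeDropEquiv P n m), Nat.card_prod,
    Nat.card_eq_fintype_card (α := List.Vector α m), card_vector]

lemma card_avoids_eq_card_sigma (hw : w ≠ []) (n : ℕ) :
    Nat.card {u : List α // u.length = n ∧ Avoids w u} =
      Nat.card (Σ j : Fin w.length, {v : List α // v.length = n + w.length - j ∧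
        IsFirstHit w v ∧ w.take (w.length - j) = w.drop j}) := by
  refine Nat.card_eq_of_bijective
    (fun u => ⟨⟨n - firstOcc w u.1, by
      have := length_lt_firstOcc_add u.2.2; have := firstOcc_le_length w u.1; have := u.2.1; omega⟩,
      ⟨(u.1 ++ w).take (firstOcc w u.1 + w.length), ?_, isFirstHit_take_firstOcc w u.1, ?_⟩⟩)
    ⟨fun u u' huu' => ?_, fun ⟨j, v, hlen, hv, hcorr⟩ => ?_⟩
  · have := firstOcc_le_length w u.1
    have := u.2.1
    simp only [List.length_take, List.length_append]
    omega
  · simpa only [u.2.1] using take_eq_drop_of_firstOcc w u.1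
  · have h := congrArg (fun s => s.2.1.take n) huu'
    simp only at h
    have hu := take_take_firstOcc u.2.2
    have hu' := take_take_firstOcc u'.2.2
    rw [u.2.1] at hu
    rw [u'.2.1] at hu'
    exact Subtype.ext (hu.symm.trans (h.trans hu'))
  · have hj := j.2
    have hvle := hv.length_le
    have happ := hv.take_append_eq hlen hj hcorr
    have hocc := hv.firstOcc_eq happ
    refine ⟨⟨v.take n, by rw [List.length_take]; omega,
      hv.avoids_of_append_eq hw happ (by rw [List.length_take]; omega)⟩, Sigma.subtype_ext ?_ ?_⟩
    · ext
      simp only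
      omega
    · simp only
      rw [hocc, Nat.sub_add_cancel hvle, happ, List.take_left' rfl]

end Lists

section Counting

variable {q : ℕ} {w : List (Fin q)}

noncomputable def avoidCount (q : ℕ) (w : List (Fin q)) (n : ℕ) : ℕ :=
  Nat.card {l : List (Fin q) // l.length = n ∧ Avoids w l}

lemma hitCount_eq_card (n : ℕ) :
    hitCount q w n = Nat.card {l : List (Fin q) // l.length = n ∧ IsFirstHit w l} :=
  Nat.card_congr <| Equiv.subtypeEquivRight fun l => by
    constructor <;> rintro ⟨rfl, h⟩ <;> exact ⟨rfl, h⟩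

lemma hitCount_eq_zero_of_lt {n : ℕ} (hn : n < w.length) : hitCount q w n = 0 := by
  rw [hitCount_eq_card, Nat.card_eq_zero]
  left
  exact ⟨fun l => by have := l.2.2.length_le; have := l.2.1; omega⟩

lemma avoidCount_zero (hw : w ≠ []) : avoidCount q w 0 = 1 := by
  rw [avoidCount, Nat.card_eq_one_iff_exists]
  refine ⟨⟨[], rfl, fun p h => hw ?_⟩, fun l => Subtype.ext (List.length_eq_zero_iff.mp l.2.1)⟩
  simpa [OccursAt] using h.symm

lemma avoidCount_succ_add_hitCount_succ (hw : w ≠ []) (n : ℕ) :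
    avoidCount q w (n + 1) + hitCount q w (n + 1) = q * avoidCount q w n := by
  classical
  have := finite_length_eq_and (α := Fin q) (n + 1) (IsFirstHit w)
  have := finite_length_eq_and (α := Fin q) (n + 1) (Avoids w)
  have hdisj : Disjoint (fun l : List (Fin q) => l.length = n + 1 ∧ IsFirstHit w l)
      (fun l => l.length = n + 1 ∧ Avoids w l) :=
    Pi.disjoint_iff.mpr fun l => Prop.disjoint_iff.mpr fun ⟨⟨_, h⟩, _, h'⟩ => h.not_avoids h'
  have hsplit : {l : List (Fin q) // l.length = n + 1 ∧ Avoids w (l.take n)} ≃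
      {l : List (Fin q) // l.length = n + 1 ∧ IsFirstHit w l} ⊕
        {l : List (Fin q) // l.length = n + 1 ∧ Avoids w l} :=
    (Equiv.subtypeEquivRight fun l => by
      constructor
      · rintro ⟨hl, h⟩
        exact ((avoids_take_iff hw hl).mp h).imp (⟨hl, ·⟩) (⟨hl, ·⟩)
      · rintro (⟨hl, h⟩ | ⟨hl, h⟩) <;> exact ⟨hl, (avoids_take_iff hw hl).mpr (by tauto)⟩).trans
      (subtypeOrEquiv _ _ hdisj)
  have hcard := card_length_add_take (Avoids w) n 1
  rw [Nat.card_congr hsplit, Nat.card_sum, ← hitCount_eq_card, Fintype.card_fin, pow_one] at hcard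
  rw [avoidCount, avoidCount, add_comm, hcard, mul_comm]

lemma card_isFirstHit_overlap (n : ℕ) (j : Fin w.length) :
    Nat.card {v : List (Fin q) // v.length = n + w.length - j ∧
        IsFirstHit w v ∧ w.take (w.length - j) = w.drop j} =
      acorrBit w (w.length - j) * hitCount q w (n + w.length - j) := by
  rw [acorrBit, Nat.sub_sub_self j.2.le, hitCount_eq_card]
  split_ifs with hcorr
  · rw [one_mul]
    exact Nat.card_congr <| Equiv.subtypeEquivRight fun v => by simp [hcorr]
  · rw [zero_mul, Nat.card_eq_zero]
    exact Or.inl ⟨fun v => hcorr v.2.2.2⟩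

lemma avoidCount_eq_sum (hw : w ≠ []) (n : ℕ) :
    avoidCount q w n = ∑ j ∈ Finset.range w.length,
      acorrBit w (w.length - j) * hitCount q w (n + w.length - j) := by
  have := fun j : Fin w.length => finite_length_eq_and (α := Fin q) (n + w.length - j)
    (fun v => IsFirstHit w v ∧ w.take (w.length - j) = w.drop j)
  rw [avoidCount, card_avoids_eq_card_sigma hw, Nat.card_sigma]
  simp only [card_isFirstHit_overlap]
  exact Fin.sum_univ_eq_sum_range
    (fun j => acorrBit w (w.length - j) * hitCount q w (n + w.length - j)) _

open PowerSeries

lemma one_sub_C_mul_X_mul_avoidCount (hw : w ≠ []) :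
    (1 - C (q : ℚ) * X) * mk (fun n => (avoidCount q w n : ℚ)) =
      1 - mk (fun n => (hitCount q w n : ℚ)) := by
  ext (_ | n)
  · simp [avoidCount_zero hw, hitCount_eq_zero_of_lt (List.length_pos_iff.mpr hw)]
  · have h : (avoidCount q w (n + 1) : ℚ) + hitCount q w (n + 1) = q * avoidCount q w n := by
      exact_mod_cast avoidCount_succ_add_hitCount_succ hw n
    rw [sub_mul, one_mul, mul_assoc, map_sub, map_sub, coeff_C_mul, coeff_succ_X_mul,
      coeff_one, if_neg n.succ_ne_zero, coeff_mk, coeff_mk, coeff_mk]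
    linarith

lemma autocorrelation_mul_hitCount (hw : w ≠ []) :
    (∑ j ∈ Finset.range w.length, C (acorrBit w (w.length - j) : ℚ) * X ^ j) *
        mk (fun n => (hitCount q w n : ℚ)) =
      X ^ w.length * mk (fun n => (avoidCount q w n : ℚ)) := by
  ext m
  simp only [Finset.sum_mul, map_sum, mul_comm (C _) (X ^ _), mul_assoc, coeff_X_pow_mul',
    coeff_C_mul, coeff_mk]
  split_ifs with hm
  · obtain ⟨n, rfl⟩ := Nat.exists_eq_add_of_le' hm
    rw [Nat.add_sub_cancel, avoidCount_eq_sum hw]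
    push_cast
    refine Finset.sum_congr rfl fun j hj => ?_
    rw [if_pos (by have := Finset.mem_range.mp hj; omega)]
  · refine Finset.sum_eq_zero fun j hj => ?_
    split_ifs
    · rw [hitCount_eq_zero_of_lt (by omega), Nat.cast_zero, mul_zero]
    · rfl

end Counting

end WordOccurrence

theorem stmt18_general (q k : ℕ) (hk : 1 ≤ k) (w : List (Fin q)) (hwlen : w.length = k) :
    (PowerSeries.X ^ k +
        (1 - PowerSeries.C (q : ℚ) * PowerSeries.X) *
          (∑ j ∈ Finset.range k,
            PowerSeries.C (acorrBit w (k - j) : ℚ) * PowerSeries.X ^ j)) *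
      PowerSeries.mk (fun n => (hitCount q w n : ℚ)) = PowerSeries.X ^ k := by
  subst hwlen
  have hw : w ≠ [] := List.length_pos_iff.mp hk
  linear_combination
    (1 - PowerSeries.C (q : ℚ) * PowerSeries.X) * WordOccurrence.autocorrelation_mul_hitCount hw +
      PowerSeries.X ^ w.length * WordOccurrence.one_sub_C_mul_X_mul_avoidCount hw

/-- Generating function identity: for `q ≥ 2` and a word `w` of length
`k ≥ 1`, as formal power series over `ℚ`,
`(z^k + (1 − q·z)·Â_w(z)) · ∑ h_w(n)·z^n = z^k`, where
`Â_w(z) = ∑_{i=1}^{k} b_i·z^(k−i)` is the autocorrelation polynomial of `w`. -/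
theorem stmt18 (q k : ℕ) (hq : 2 ≤ q) (hk : 1 ≤ k) (w : List (Fin q)) (hwlen : w.length = k) :
    (PowerSeries.X ^ k +
        (1 - PowerSeries.C (q : ℚ) * PowerSeries.X) *
          (∑ j ∈ Finset.range k,
            PowerSeries.C (acorrBit w (k - j) : ℚ) * PowerSeries.X ^ j)) *
      PowerSeries.mk (fun n => (hitCount q w n : ℚ)) = PowerSeries.X ^ k :=
  stmt18_general q k hk w hwlen
end

section
/- For every integer q ≥ 2 and every word w of length k ≥ 1 over an alphabet of q letters, the series Σ_{n=0}^{∞} h_w(n)·q^{−n} converges and equals 1; equivalently, the first hitting probabilities satisfy Σ_{n=0}^{∞} P_h(w,n) = 1. -/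
/-!
Let `a n` be the number of words of length `n` over a `q`-letter alphabet avoiding `w`. A word of
length `n + 1` whose first `n` letters avoid `w` either still avoids `w` or ends with the first
occurrence of `w`, so `a (n + 1) + h_w (n + 1) = q * a n`. This telescopes to
`∑_{m ≤ n} h_w(m) q^(-m) = 1 - a n / q^n`. Cutting a word into blocks of length `k`, none of
which can be `w`, gives `a (n + k) ≤ (q^k - 1) * a n`, so `a n / q^n → 0` geometrically.
-/

open Filter Topology

section Words

variable {α : Type*}

def OccursAt (w l : List α) (p : ℕ) : Prop :=
  (l.drop p).take w.length = w

def avoidingWords (w : List α) (n : ℕ) : Set (List α) :=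
  {l | l.length = n ∧ ∀ p, ¬ OccursAt w l p}

def firstHitWords (w : List α) (n : ℕ) : Set (List α) :=
  {l | l.length = n ∧ l.drop (n - w.length) = w ∧ ∀ p < n - w.length, ¬ OccursAt w l p}

variable {w l : List α} {n p : ℕ}

lemma occursAt_of_drop_eq (h : l.drop p = w) : OccursAt w l p := by
  rw [OccursAt, h, List.take_length]

lemma OccursAt.drop_eq (h : OccursAt w l p) (hl : l.length = p + w.length) : l.drop p = w := by
  rwa [OccursAt, List.take_of_length_le (by simp [hl])] at h

lemma OccursAt.add_length_le (hw : w ≠ []) (h : OccursAt w l p) : p + w.length ≤ l.length := by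
  have hlen := congrArg List.length h
  have hw₀ := List.length_pos_of_ne_nil hw
  simp only [List.length_take, List.length_drop] at hlen
  omega

lemma occursAt_take_of_add_length_le (h : p + w.length ≤ n) :
    OccursAt w (l.take n) p ↔ OccursAt w l p := by
  rw [OccursAt, OccursAt, List.drop_take, List.take_take, min_eq_left (by omega)]

lemma occursAt_take_iff (hw : w ≠ []) :
    OccursAt w (l.take n) p ↔ p + w.length ≤ n ∧ OccursAt w l p := by
  refine ⟨fun h => ?_, fun h => (occursAt_take_of_add_length_le h.1).2 h.2⟩
  have hle := (h.add_length_le hw).trans (List.length_take_le n l)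
  exact ⟨hle, (occursAt_take_of_add_length_le hle).1 h⟩

lemma avoidingWords_zero (hw : w ≠ []) : avoidingWords w 0 = {[]} := by
  ext l
  refine ⟨fun h => List.length_eq_zero_iff.1 h.1, ?_⟩
  rintro rfl
  exact ⟨rfl, fun p h => hw (by simpa using h.add_length_le hw : p = 0 ∧ w = []).2⟩

lemma firstHitWords_eq_empty_of_lt (h : n < w.length) : firstHitWords w n = ∅ := by
  refine Set.eq_empty_of_forall_notMem fun l hl => ?_
  have hlen := congrArg List.length hl.2.1
  simp only [List.length_drop, hl.1] at hlen
  omega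

lemma disjoint_avoidingWords_firstHitWords : Disjoint (avoidingWords w n) (firstHitWords w n) :=
  Set.disjoint_left.2 fun _ hA hH => hA.2 _ (occursAt_of_drop_eq hH.2.1)

lemma setOf_take_mem_avoidingWords (hw : w ≠ []) (n : ℕ) :
    {l | l.length = n + 1 ∧ l.take n ∈ avoidingWords w n} =
      avoidingWords w (n + 1) ∪ firstHitWords w (n + 1) := by
  ext l
  simp only [avoidingWords, firstHitWords, Set.mem_ofPred_eq, Set.mem_union, List.length_take,
    occursAt_take_iff hw, not_and]
  constructor
  · rintro ⟨hl, -, hprefix⟩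
    by_cases hend : l.drop (n + 1 - w.length) = w
    · exact Or.inr ⟨hl, hend, fun p hp => hprefix p (by omega)⟩
    · refine Or.inl ⟨hl, fun p hp => ?_⟩
      have hle := hp.add_length_le hw
      by_cases hpn : p + w.length ≤ n
      · exact hprefix p hpn hp
      · exact hend (by rw [show n + 1 - w.length = p by omega]; exact hp.drop_eq (by omega))
  · rintro (⟨hl, havoid⟩ | ⟨hl, -, hprefix⟩)
    · exact ⟨hl, by omega, fun p _ => havoid p⟩
    · exact ⟨hl, by omega, fun p hp => hprefix p (by omega)⟩

lemma ncard_le_ncard_mul_ncard_of_take_drop (n : ℕ) {U S T : Set (List α)} (hS : S.Finite)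
    (hT : T.Finite) (h : ∀ l ∈ U, l.take n ∈ S ∧ l.drop n ∈ T) :
    U.ncard ≤ S.ncard * T.ncard := by
  rw [← Set.ncard_prod]
  refine Set.ncard_le_ncard_of_injOn (fun l => (l.take n, l.drop n)) h ?_ (hS.prod hT)
  intro l _ l' _ hll'
  simp only [Prod.mk.injEq] at hll'
  rw [← List.take_append_drop n l, ← List.take_append_drop n l', hll'.1, hll'.2]

end Words

section Counting

variable {α : Type*} [Fintype α] {w : List α} {n : ℕ}

lemma avoidingWords_finite : (avoidingWords w n).Finite :=
  (List.finite_length_eq α n).subset fun _ h => h.1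

lemma firstHitWords_finite : (firstHitWords w n).Finite :=
  (List.finite_length_eq α n).subset fun _ h => h.1

lemma ncard_setOf_length_eq (n : ℕ) :
    {l : List α | l.length = n}.ncard = Fintype.card α ^ n := by
  rw [← Nat.card_coe_set_eq]
  exact (Nat.card_eq_fintype_card (α := List.Vector α n)).trans (card_vector n)

lemma ncard_setOf_take_mem {A : Set (List α)} (hA : ∀ u ∈ A, u.length = n) :
    {l : List α | l.length = n + 1 ∧ l.take n ∈ A}.ncard = A.ncard * Fintype.card α := by
  have himage : {l : List α | l.length = n + 1 ∧ l.take n ∈ A} =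
      (fun x : List α × α => x.1 ++ [x.2]) '' (A ×ˢ Set.univ) := by
    ext l
    constructor
    · rintro ⟨hl, hmem⟩
      obtain ⟨a, ha⟩ := List.length_eq_one_iff.1 (by simp [hl] : (l.drop n).length = 1)
      exact ⟨(l.take n, a), ⟨hmem, trivial⟩,
        show l.take n ++ [a] = l by rw [← ha, List.take_append_drop]⟩
    · rintro ⟨⟨u, a⟩, ⟨hu, -⟩, rfl⟩
      simp [hA u hu, hu]
  have hinj : Function.Injective (fun x : List α × α => x.1 ++ [x.2]) := fun x y h => by
    obtain ⟨h₁, h₂⟩ := List.append_inj' h rfl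
    exact Prod.ext h₁ (List.singleton_inj.1 h₂)
  rw [himage, Set.ncard_image_of_injective _ hinj, Set.ncard_prod, Set.ncard_univ,
    Nat.card_eq_fintype_card]

lemma ncard_avoidingWords_succ_add (hw : w ≠ []) (n : ℕ) :
    (avoidingWords w (n + 1)).ncard + (firstHitWords w (n + 1)).ncard =
      (avoidingWords w n).ncard * Fintype.card α := by
  rw [← Set.ncard_union_eq disjoint_avoidingWords_firstHitWords avoidingWords_finite
    firstHitWords_finite, ← setOf_take_mem_avoidingWords hw, ncard_setOf_take_mem fun _ h => h.1]

/-- The last `w.length` letters of a word avoiding `w` form a block different from `w`. -/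
lemma ncard_avoidingWords_add_length_le (hw : w ≠ []) (n : ℕ) :
    (avoidingWords w (n + w.length)).ncard ≤
      (avoidingWords w n).ncard * (Fintype.card α ^ w.length - 1) := by
  have hblocks :
      {u : List α | u.length = w.length ∧ u ≠ w} = {u | u.length = w.length} \ {w} := by
    ext u
    simp
  rw [← ncard_setOf_length_eq, ← Set.ncard_sdiff_singleton_of_mem (by exact rfl), ← hblocks]
  refine ncard_le_ncard_mul_ncard_of_take_drop n avoidingWords_finite
    ((List.finite_length_eq α _).subset fun _ h => h.1)
    fun l hl => ⟨⟨?_, fun p hp => ?_⟩, ?_, ?_⟩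
  · simp [hl.1]
  · exact hl.2 p ((occursAt_take_iff hw).1 hp).2
  · simp [hl.1]
  · exact fun h => hl.2 n (occursAt_of_drop_eq h)

end Counting

section Series

variable {α : Type*} [Fintype α] {w : List α}

noncomputable def avoidProb (w : List α) (n : ℕ) : ℝ :=
  (avoidingWords w n).ncard / (Fintype.card α : ℝ) ^ n

lemma avoidProb_nonneg (w : List α) (n : ℕ) : 0 ≤ avoidProb w n := by
  unfold avoidProb; positivity

lemma card_pos_of_ne_nil (hw : w ≠ []) : 0 < Fintype.card α :=
  Fintype.card_pos_iff.2 ⟨w.head hw⟩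

lemma sum_range_succ_ncard_firstHitWords_div (hw : w ≠ []) (n : ℕ) :
    ∑ m ∈ Finset.range (n + 1), ((firstHitWords w m).ncard : ℝ) / (Fintype.card α : ℝ) ^ m =
      1 - avoidProb w n := by
  have hcard : (Fintype.card α : ℝ) ≠ 0 := by exact_mod_cast (card_pos_of_ne_nil hw).ne'
  induction n with
  | zero =>
    simp [avoidProb, avoidingWords_zero hw,
      firstHitWords_eq_empty_of_lt (List.length_pos_of_ne_nil hw)]
  | succ n ih =>
    have hrec : ((firstHitWords w (n + 1)).ncard : ℝ) =
        (avoidingWords w n).ncard * Fintype.card α - (avoidingWords w (n + 1)).ncard := by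
      rw [eq_sub_iff_add_eq', ← Nat.cast_add, ncard_avoidingWords_succ_add hw, Nat.cast_mul]
    rw [Finset.sum_range_succ, ih, hrec, avoidProb, avoidProb, pow_succ]
    field_simp
    ring

lemma avoidProb_antitone (hw : w ≠ []) : Antitone (avoidProb w) := by
  refine antitone_nat_of_succ_le fun n => ?_
  have h := sum_range_succ_ncard_firstHitWords_div hw (n + 1)
  rw [Finset.sum_range_succ, sum_range_succ_ncard_firstHitWords_div hw n] at h
  have : (0 : ℝ) ≤ (firstHitWords w (n + 1)).ncard / (Fintype.card α : ℝ) ^ (n + 1) := by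
    positivity
  linarith

lemma avoidProb_add_length_le (hw : w ≠ []) (n : ℕ) :
    avoidProb w (n + w.length) ≤
      (1 - ((Fintype.card α : ℝ) ^ w.length)⁻¹) * avoidProb w n := by
  have hcard : (0 : ℝ) < Fintype.card α := by exact_mod_cast card_pos_of_ne_nil hw
  have hblock : ((avoidingWords w (n + w.length)).ncard : ℝ) ≤
      (avoidingWords w n).ncard * ((Fintype.card α : ℝ) ^ w.length - 1) := by
    have hone : 1 ≤ Fintype.card α ^ w.length := Nat.one_le_pow _ _ (card_pos_of_ne_nil hw)
    have h := ncard_avoidingWords_add_length_le hw n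
    rw [← Nat.cast_le (α := ℝ)] at h
    push_cast [Nat.cast_sub hone] at h
    exact h
  calc avoidProb w (n + w.length)
      ≤ (avoidingWords w n).ncard * ((Fintype.card α : ℝ) ^ w.length - 1) /
          (Fintype.card α : ℝ) ^ (n + w.length) := by
        unfold avoidProb; gcongr
    _ = (1 - ((Fintype.card α : ℝ) ^ w.length)⁻¹) * avoidProb w n := by
        unfold avoidProb; field_simp; ring

lemma tendsto_avoidProb_atTop (hw : w ≠ []) : Tendsto (avoidProb w) atTop (𝓝 0) := by
  set c : ℝ := 1 - ((Fintype.card α : ℝ) ^ w.length)⁻¹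
  have hcard : (1 : ℝ) ≤ (Fintype.card α : ℝ) ^ w.length :=
    one_le_pow₀ (by exact_mod_cast card_pos_of_ne_nil hw)
  have hc₀ : 0 ≤ c := sub_nonneg.2 (inv_le_one_of_one_le₀ hcard)
  have hc₁ : c < 1 := sub_lt_self _ (inv_pos.2 (by linarith))
  have hblocks : ∀ m, avoidProb w (m * w.length) ≤ c ^ m := by
    intro m
    induction m with
    | zero => simp [avoidProb, avoidingWords_zero hw]
    | succ m ih =>
      calc avoidProb w ((m + 1) * w.length)
          ≤ c * avoidProb w (m * w.length) := by
            rw [add_one_mul]; exact avoidProb_add_length_le hw _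
        _ ≤ c * c ^ m := by gcongr
        _ = c ^ (m + 1) := (pow_succ' c m).symm
  have hbound : ∀ n, avoidProb w n ≤ c ^ (n / w.length) := fun n =>
    (avoidProb_antitone hw (Nat.div_mul_le_self n w.length)).trans (hblocks _)
  exact squeeze_zero (avoidProb_nonneg w) hbound
    ((tendsto_pow_atTop_nhds_zero_of_lt_one hc₀ hc₁).comp
      (Nat.tendsto_div_const_atTop (List.length_pos_of_ne_nil hw).ne'))

theorem hasSum_ncard_firstHitWords_div (hw : w ≠ []) :
    HasSum (fun n => ((firstHitWords w n).ncard : ℝ) / (Fintype.card α : ℝ) ^ n) 1 := by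
  rw [hasSum_iff_tendsto_nat_of_nonneg (fun _ => by positivity), ← tendsto_add_atTop_iff_nat 1]
  simp only [sum_range_succ_ncard_firstHitWords_div hw]
  simpa using (tendsto_avoidProb_atTop hw).const_sub 1

end Series

lemma hitCount_eq_ncard (q : ℕ) (w : List (Fin q)) (n : ℕ) :
    hitCount q w n = (firstHitWords w n).ncard :=
  Nat.card_coe_set_eq _

theorem stmt19_general (q k : ℕ) (hk : 1 ≤ k) (w : List (Fin q)) (hwlen : w.length = k) :
    HasSum (fun n : ℕ => (hitCount q w n : ℝ) / (q : ℝ) ^ n) 1 ∧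
    HasSum (fun n : ℕ => hitProb q w n) 1 := by
  have hw : w ≠ [] := List.ne_nil_of_length_pos (by omega)
  have hsum : HasSum (fun n : ℕ => (hitCount q w n : ℝ) / (q : ℝ) ^ n) 1 := by
    simpa only [hitCount_eq_ncard, Fintype.card_fin] using hasSum_ncard_firstHitWords_div hw
  have hshort : ∑ n ∈ Finset.range w.length, (hitCount q w n : ℝ) / (q : ℝ) ^ n = 0 :=
    Finset.sum_eq_zero fun n hn => by
      rw [hitCount_eq_ncard, firstHitWords_eq_empty_of_lt (Finset.mem_range.1 hn)]
      simp
  refine ⟨hsum, ?_⟩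
  unfold hitProb
  exact (hasSum_nat_add_iff (f := fun n => (hitCount q w n : ℝ) / (q : ℝ) ^ n) w.length).2
    (by rwa [hshort, add_zero])

/-- For `q ≥ 2` and a word `w` of length `k ≥ 1`, the series
`∑ h_w(n)·q^(−n)` converges to `1`; equivalently `∑ P_h(w,n) = 1`. -/
theorem stmt19 (q k : ℕ) (hq : 2 ≤ q) (hk : 1 ≤ k) (w : List (Fin q)) (hwlen : w.length = k) :
    HasSum (fun n : ℕ => (hitCount q w n : ℝ) / (q : ℝ) ^ n) 1 ∧
    HasSum (fun n : ℕ => hitProb q w n) 1 :=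
  stmt19_general q k hk w hwlen
end
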